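/- arXiv:2411.17983 — 11 statements merged into one kernel-verified Lean document; each statement's English description precedes it below -/
import Mathlib

section
/- In OptCS-MSel, the score-generating functional V defined by V^{(j)} = (V_{n₁+1}(k̂_j), …, V_n(k̂_j), V̂_{n+1}(k̂_j), …, V̂_{n+m}(k̂_j)) is, for every j in [m], monotone for the j-th null and permutation equivariant, and the auxiliary selection function R defined by R̂_j = |S_j(k̂_j)| is permutation invariant under the j-th null. Consequently, if for every j in [m] the vector (Z_1, …, Z_n, Z_{n+j}) is exchangeable conditional on {Ẑ_{n+ℓ}}_{ℓ≠j}, then the output of OptCS-MSel (under any of the three pruning options) satisfies FDR ≤ q. -/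
open MeasureTheory ProbabilityTheory

/-- The pruning threshold `r*(λ) = max{r ∈ {0,…,m} : #{j : p_j ≤ q·R̂_j/m and λ_j·R̂_j ≤ r} ≥ r}`. -/
noncomputable def prunedThreshold (m : ℕ) (q : ℝ) (p R lam : Fin m → ℝ) : ℕ :=
  Nat.findGreatest
    (fun r => r ≤ Set.ncard {j : Fin m | p j ≤ q * R j / m ∧ lam j * R j ≤ (r : ℝ)}) m

/-- The pruned selection set `S(λ) = {j : p_j ≤ q·R̂_j/m and λ_j·R̂_j ≤ r*(λ)}`. -/
noncomputable def prunedSet (m : ℕ) (q : ℝ) (p R lam : Fin m → ℝ) : Set (Fin m) :=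
  {j : Fin m | p j ≤ q * R j / m ∧ lam j * R j ≤ (prunedThreshold m q p R lam : ℝ)}

/-- The BH index `r*_BH = max{r ∈ {0,…,m} : #{j : p_j ≤ q·r/m} ≥ r}`. -/
noncomputable def bhThreshold (m : ℕ) (q : ℝ) (p : Fin m → ℝ) : ℕ :=
  Nat.findGreatest (fun r => r ≤ Set.ncard {j : Fin m | p j ≤ q * (r : ℝ) / m}) m

/-- The BH selection set `S_BH = {j : p_j ≤ q·r*_BH/m}`. -/
noncomputable def bhSet (m : ℕ) (q : ℝ) (p : Fin m → ℝ) : Set (Fin m) :=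
  {j : Fin m | p j ≤ q * (bhThreshold m q p : ℝ) / m}

namespace OptCS

/-- A score-generating functional: maps preparatory, calibration, and test inputs to an
m × (n₂ + m) matrix of scores; `V prep cal test j` is the j-th row, giving scores for the n₂
calibration points (`Sum.inl`) and the m test points (`Sum.inr`). -/
abbrev SGF (𝓧 𝓨 : Type*) (n₁ n₂ m : ℕ) :=
  (Fin n₁ → 𝓧 × 𝓨) → (Fin n₂ → 𝓧 × 𝓨) → (Fin m → 𝓧 × 𝓨) → Fin m → Fin n₂ ⊕ Fin m → ℝ

/-- An auxiliary selection function, producing the m auxiliary selection sizes. -/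
abbrev ASF (𝓧 𝓨 : Type*) (n₁ n₂ m : ℕ) :=
  (Fin n₁ → 𝓧 × 𝓨) → (Fin n₂ → 𝓧 × 𝓨) → (Fin m → 𝓧 × 𝓨) → Fin m → ℝ

variable {𝓧 𝓨 : Type*}

/-- The combined vector of the n₂ calibration inputs together with a value `zj` in the j-th
test slot, indexed by `Option (Fin n₂)` (`none` is the j-th test slot). -/
def combine {n₂ : ℕ} (cal : Fin n₂ → 𝓧 × 𝓨) (zj : 𝓧 × 𝓨) : Option (Fin n₂) → 𝓧 × 𝓨 :=
  fun o => o.elim zj cal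

/-- The output coordinates corresponding to the index set {calibration points, j-th test point}. -/
def coordIdx {n₂ m : ℕ} (j : Fin m) : Option (Fin n₂) → Fin n₂ ⊕ Fin m :=
  fun o => o.elim (Sum.inr j) Sum.inl

/-- Monotonicity for the j-th null: with thresholds c = cfun x, whenever y ≤ cfun x, replacing
the j-th test input (x, cfun x) by (x, y) does not increase the (n₂+j)-th coordinate of the j-th
row; and for ℓ ≠ j, replacing the ℓ-th test input (x, cfun x) by (x, y) (with y ≤ cfun x) leaves
the ℓ-th test coordinate of the j-th row unchanged. -/
def MonotoneNull [Preorder 𝓨] {n₁ n₂ m : ℕ} (cfun : 𝓧 → 𝓨) (V : SGF 𝓧 𝓨 n₁ n₂ m)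
    (j : Fin m) : Prop :=
  (∀ (prep : Fin n₁ → 𝓧 × 𝓨) (cal : Fin n₂ → 𝓧 × 𝓨) (test : Fin m → 𝓧 × 𝓨) (x : 𝓧) (y : 𝓨),
      y ≤ cfun x →
      V prep cal (Function.update test j (x, y)) j (Sum.inr j)
        ≤ V prep cal (Function.update test j (x, cfun x)) j (Sum.inr j)) ∧
  (∀ (prep : Fin n₁ → 𝓧 × 𝓨) (cal : Fin n₂ → 𝓧 × 𝓨) (test : Fin m → 𝓧 × 𝓨) (l : Fin m),
      l ≠ j → ∀ (x : 𝓧) (y : 𝓨), y ≤ cfun x →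
      V prep cal (Function.update test l (x, y)) j (Sum.inr l)
        = V prep cal (Function.update test l (x, cfun x)) j (Sum.inr l))

/-- Permutation equivariance: for every j, jointly permuting the n₂ calibration inputs and the
j-th test input permutes the corresponding coordinates of the j-th row accordingly. -/
def PermEquivariant {n₁ n₂ m : ℕ} (V : SGF 𝓧 𝓨 n₁ n₂ m) : Prop :=
  ∀ (j : Fin m) (prep : Fin n₁ → 𝓧 × 𝓨) (cal : Fin n₂ → 𝓧 × 𝓨) (test : Fin m → 𝓧 × 𝓨)
    (π : Equiv.Perm (Option (Fin n₂))) (i : Option (Fin n₂)),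
    V prep (fun i' => combine cal (test j) (π (some i')))
        (Function.update test j (combine cal (test j) (π none))) j (coordIdx j i)
      = V prep cal test j (coordIdx j (π i))

/-- Permutation invariance under the j-th null for an auxiliary selection function. -/
def PermInvariantNull [Preorder 𝓨] {n₁ n₂ m : ℕ} (cfun : 𝓧 → 𝓨) (R : ASF 𝓧 𝓨 n₁ n₂ m)
    (j : Fin m) : Prop :=
  ∃ R₀ : ASF 𝓧 𝓨 n₁ n₂ m,
    (∀ (prep : Fin n₁ → 𝓧 × 𝓨) (cal : Fin n₂ → 𝓧 × 𝓨) (test : Fin m → 𝓧 × 𝓨) (x : 𝓧) (y : 𝓨),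
        y ≤ cfun x →
        R₀ prep cal (Function.update test j (x, y)) j
          ≤ R prep cal (Function.update test j (x, cfun x)) j) ∧
    (∀ (prep : Fin n₁ → 𝓧 × 𝓨) (cal : Fin n₂ → 𝓧 × 𝓨) (test : Fin m → 𝓧 × 𝓨)
        (π : Equiv.Perm (Option (Fin n₂))),
        R₀ prep (fun i' => combine cal (test j) (π (some i')))
            (Function.update test j (combine cal (test j) (π none))) j
          = R₀ prep cal test j)

/-- The OptCS conformal p-values `p_j = (1 + #{i : V_i^{(j)} ≤ V̂_{n+j}^{(j)}})/(n₂+1)`. -/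
noncomputable def pvals {n₁ n₂ m : ℕ} (V : SGF 𝓧 𝓨 n₁ n₂ m)
    (prep : Fin n₁ → 𝓧 × 𝓨) (cal : Fin n₂ → 𝓧 × 𝓨) (test : Fin m → 𝓧 × 𝓨) : Fin m → ℝ :=
  fun j =>
    (1 + (Set.ncard {i : Fin n₂ |
        V prep cal test j (Sum.inl i) ≤ V prep cal test j (Sum.inr j)} : ℝ)) / (n₂ + 1)

/-- A deterministic argmax over `Fin K`. -/
noncomputable def argmaxFin {K : ℕ} (hK : 0 < K) (f : Fin K → ℕ) : Fin K :=
  (Finset.exists_max_image Finset.univ f ⟨⟨0, hK⟩, Finset.mem_univ _⟩).choose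

variable {𝓧 : Type*}

/-- OptCS-MSel modified p-values `p̃_ℓ^{(j)}(k)` (the j-th entry is set to 0, encoding the
extra zero p-value). -/
noncomputable def mselPtilde (n₂ m K : ℕ) (Vsc : Fin K → 𝓧 × ℝ → ℝ)
    (cal : Fin n₂ → 𝓧 × ℝ) (test : Fin m → 𝓧 × ℝ) (j : Fin m) (k : Fin K) : Fin m → ℝ :=
  fun l => if l = j then 0 else
    ((Set.ncard {i : Fin n₂ | Vsc k (cal i) ≤ Vsc k (test l)} : ℝ) +
        (if Vsc k (test j) ≤ Vsc k (test l) then (1 : ℝ) else 0)) / (n₂ + 1)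

/-- The permutation-invariant estimate `S_j(k)`: BH at level q applied to
`{p̃_ℓ^{(j)}(k)}_{ℓ≠j} ∪ {0}`. -/
noncomputable def mselSel (n₂ m K : ℕ) (q : ℝ) (Vsc : Fin K → 𝓧 × ℝ → ℝ)
    (cal : Fin n₂ → 𝓧 × ℝ) (test : Fin m → 𝓧 × ℝ) (j : Fin m) (k : Fin K) : Set (Fin m) :=
  bhSet m q (mselPtilde n₂ m K Vsc cal test j k)

/-- The selected model index `k̂_j = argmax_k |S_j(k)|`. -/
noncomputable def mselKhat (n₂ m K : ℕ) (hK : 0 < K) (q : ℝ) (Vsc : Fin K → 𝓧 × ℝ → ℝ)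
    (cal : Fin n₂ → 𝓧 × ℝ) (test : Fin m → 𝓧 × ℝ) (j : Fin m) : Fin K :=
  argmaxFin hK (fun k => Set.ncard (mselSel n₂ m K q Vsc cal test j k))

/-- The OptCS-MSel score-generating functional: row j uses the scores of the selected
model k̂_j. -/
noncomputable def mselV (n₁ n₂ m K : ℕ) (hK : 0 < K) (q : ℝ) (Vsc : Fin K → 𝓧 × ℝ → ℝ) :
    SGF 𝓧 ℝ n₁ n₂ m :=
  fun _prep cal test j =>
    Sum.elim (fun i => Vsc (mselKhat n₂ m K hK q Vsc cal test j) (cal i))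
      (fun l => Vsc (mselKhat n₂ m K hK q Vsc cal test j) (test l))

/-- The OptCS-MSel auxiliary selection function `R̂_j = |S_j(k̂_j)|`. -/
noncomputable def mselR (n₁ n₂ m K : ℕ) (hK : 0 < K) (q : ℝ) (Vsc : Fin K → 𝓧 × ℝ → ℝ) :
    ASF 𝓧 ℝ n₁ n₂ m :=
  fun _prep cal test j =>
    (Set.ncard (mselSel n₂ m K q Vsc cal test j
        (mselKhat n₂ m K hK q Vsc cal test j)) : ℝ)

/-!
Write the false discovery proportion as `∑ⱼ 1{j null} · 1{j ∈ S} / max(1, |S|)` and bound the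
expectation of each term by `q / m` in two steps.

Pruning. For fixed data, `S(ξ)` shrinks as the pruning variables grow, and `j ∈ S(ξ)` forces
`p_j ≤ q R̂_j / m` and `ξ_j R̂_j ≤ |S(ξ)|`. If `u` is the largest value of `ξ_j` keeping `j`
selected, then `|S(ξ)| ≥ u R̂_j` while `j` is selected, so averaging over a uniform `ξ_j` costs at
most `u / max(1, u R̂_j) ≤ 1 / max(1, R̂_j)`: the term is dominated by
`1{j null} · 1{p_j ≤ q R̂_j / m} / max(1, R̂_j)`, pointwise when `ξ = 1`.

Exchangeability. The modified p-values `p̃^{(j)}`, hence `k̂_j` and `R̂_j`, see the calibration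
points and the `j`-th test point only through the pool of their scores, and a null point has the
same scores as its clipped version. So among the `n₂ + 1` configurations obtained by swapping the
`j`-th test point with a calibration point, all those whose test point is null share `k̂_j` and
`R̂_j`, and in each of them `p_j` is the rank of the test point's score in the pool. At most `T`
points have rank at most `T`, so the dominating terms of the `n₂ + 1` configurations sum to at
most `(n₂ + 1) q / m`, and by exchangeability they all have the same expectation.

Measurability comes from the same observation: every quantity depends on the data through
finitely many comparisons of scores, thresholds and labels.
-/

theorem ncard_setOf_option {ι : Type*} [Fintype ι] (P : Option ι → Prop) [DecidablePred P] :
    {o | P o}.ncard = {i | P (some i)}.ncard + if P none then 1 else 0 := by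
  simp only [Set.ncard_eq_toFinset_card', Set.toFinset_ofPred, Finset.card_filter,
    Fintype.sum_option]
  omega

theorem ncard_setOf_comp_equiv {α β : Type*} (e : α ≃ β) (P : β → Prop) :
    {a | P (e a)}.ncard = {b | P b}.ncard :=
  Set.ncard_preimage_of_injective_subset_range e.injective
    fun b _ => ⟨e.symm b, e.apply_symm_apply b⟩

theorem ncard_rank_le_le {ι : Type*} [Finite ι] (s : ι → ℝ) {T : ℝ} (hT : 0 ≤ T) :
    ({a | ({b | s b ≤ s a}.ncard : ℝ) ≤ T}.ncard : ℝ) ≤ T := by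
  set A := {a | ({b | s b ≤ s a}.ncard : ℝ) ≤ T}
  obtain h | h := A.eq_empty_or_nonempty
  · simpa [h] using hT
  obtain ⟨a, ha, hmax⟩ := Set.exists_max_image A s A.toFinite h
  calc (A.ncard : ℝ) ≤ {b | s b ≤ s a}.ncard := by
        exact_mod_cast Set.ncard_le_ncard fun b hb => hmax b hb
    _ ≤ T := ha

theorem measurable_of_factorsThrough {α β γ : Type*} [MeasurableSpace α] [MeasurableSpace β]
    [MeasurableSpace γ] [Countable γ] [MeasurableSingletonClass γ] {c : α → γ}
    (hc : Measurable c) {f : α → β} (hf : f.FactorsThrough c) : Measurable f := by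
  obtain hα | hα := isEmpty_or_nonempty α
  · exact Subsingleton.measurable
  have hfc : f = (fun g => f (Function.invFun c g)) ∘ c :=
    funext fun a => (hf (Function.invFun_eq ⟨a, rfl⟩)).symm
  rw [hfc]
  exact (measurable_of_countable _).comp hc

theorem measurable_prod_of_factorsThrough {α β γ δ : Type*} [MeasurableSpace α]
    [MeasurableSpace β] [MeasurableSpace γ] [MeasurableSpace δ] [Countable γ]
    [MeasurableSingletonClass γ] {c : α → γ} (hc : Measurable c) {f : α × β → δ}
    (hf : ∀ x, (fun a => f (a, x)).FactorsThrough c) (hfx : ∀ a, Measurable fun x => f (a, x)) :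
    Measurable f := by
  obtain hα | hα := isEmpty_or_nonempty α
  · exact Subsingleton.measurable
  set F := fun z : γ × β => f (Function.invFun c z.1, z.2)
  have hfc : f = F ∘ Prod.map c id :=
    funext fun z => (hf z.2 (Function.invFun_eq ⟨z.1, rfl⟩)).symm
  rw [hfc]
  exact (measurable_from_prod_countable_right (f := F) fun g => hfx (Function.invFun c g)).comp
    (hc.prodMap measurable_id)

theorem measurable_ncard_setOf {α ι : Type*} [MeasurableSpace α] [Finite ι] {P : ι → α → Prop}
    (hP : ∀ i, MeasurableSet {a | P i a}) : Measurable fun a => {i | P i a}.ncard :=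
  measurable_of_factorsThrough (c := fun a i => P i a)
    (measurable_pi_lambda _ fun i => measurableSet_setOfPred.mp (hP i))
    fun a b hab => by simp only [hab]

theorem measurable_combine {α β : Type*} [MeasurableSpace α] [MeasurableSpace β] {n₂ : ℕ} :
    Measurable fun z : (Fin n₂ → α × β) × (α × β) => combine z.1 z.2 :=
  measurable_pi_lambda _ fun o => by
    rcases o with _ | i
    exacts [measurable_snd, (measurable_pi_apply i).comp measurable_fst]

def insertAt {α : Type*} {m : ℕ} (j : Fin m) (z : α) (t : {l // l ≠ j} → α) : Fin m → α :=
  fun l => if h : l = j then z else t ⟨l, h⟩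

@[simp]
theorem insertAt_self {α : Type*} {m : ℕ} (j : Fin m) (z : α) (t : {l // l ≠ j} → α) :
    insertAt j z t j = z :=
  dif_pos rfl

theorem insertAt_of_ne {α : Type*} {m : ℕ} {j l : Fin m} (hl : l ≠ j) (z : α)
    (t : {l // l ≠ j} → α) : insertAt j z t l = t ⟨l, hl⟩ :=
  dif_neg hl

theorem measurable_insertAt {α : Type*} [MeasurableSpace α] {m : ℕ} (j : Fin m) :
    Measurable fun z : α × ({l // l ≠ j} → α) => insertAt j z.1 z.2 := by
  refine measurable_pi_lambda _ fun l => ?_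
  by_cases hl : l = j
  · subst hl
    simpa using measurable_fst
  · simp only [insertAt_of_ne hl]
    exact (measurable_pi_apply _).comp measurable_snd

section Probability

variable {Ω α : Type*} [MeasurableSpace Ω] [MeasurableSpace α] {μ : Measure Ω}

theorem integral_comp_le_of_indepFun [IsProbabilityMeasure μ] {β : Type*} [MeasurableSpace β]
    {X : Ω → α} {Y : Ω → β} (hX : Measurable X) (hY : Measurable Y) (hYX : IndepFun Y X μ)
    {g : α × β → ℝ} (hg : Integrable g ((μ.map X).prod (μ.map Y))) {H : α → ℝ}
    (hH : Integrable H (μ.map X)) (hle : ∀ a, ∫ y, g (a, y) ∂(μ.map Y) ≤ H a) :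
    ∫ ω, g (X ω, Y ω) ∂μ ≤ ∫ ω, H (X ω) ∂μ := by
  have hprod : μ.map (fun ω => (X ω, Y ω)) = (μ.map X).prod (μ.map Y) :=
    (indepFun_iff_map_prod_eq_prod_map_map hX.aemeasurable hY.aemeasurable).mp hYX.symm
  calc ∫ ω, g (X ω, Y ω) ∂μ = ∫ z, g z ∂(μ.map fun ω => (X ω, Y ω)) :=
        (integral_map (hX.prodMk hY).aemeasurable (hprod ▸ hg.aestronglyMeasurable)).symm
    _ = ∫ a, ∫ y, g (a, y) ∂(μ.map Y) ∂(μ.map X) := by rw [hprod, integral_prod _ hg]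
    _ ≤ ∫ a, H a ∂(μ.map X) := integral_mono hg.integral_prod_left hH hle
    _ = ∫ ω, H (X ω) ∂μ := integral_map hX.aemeasurable hH.aestronglyMeasurable

theorem integral_le_of_sum_comp_le [IsProbabilityMeasure μ] {ι : Type*} [Fintype ι] [Nonempty ι]
    {X : Ω → α} (hX : Measurable X) {T : ι → α → α} (hT : ∀ i, Measurable (T i))
    (hlaw : ∀ i, μ.map (fun ω => T i (X ω)) = μ.map X) {f : α → ℝ} (hf : Integrable f (μ.map X))
    {c : ℝ} (hsum : ∀ a, ∑ i, f (T i a) ≤ Fintype.card ι * c) :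
    ∫ ω, f (X ω) ∂μ ≤ c := by
  have hint : ∀ i, Integrable (fun ω => f (T i (X ω))) μ := fun i =>
    (hlaw i ▸ hf).comp_measurable ((hT i).comp hX)
  have hcomp : ∀ i, ∫ ω, f (T i (X ω)) ∂μ = ∫ ω, f (X ω) ∂μ := fun i => calc
    _ = ∫ a, f a ∂(μ.map fun ω => T i (X ω)) :=
      (integral_map ((hT i).comp hX).aemeasurable (hlaw i ▸ hf.aestronglyMeasurable)).symm
    _ = ∫ a, f a ∂(μ.map X) := by rw [hlaw i]
    _ = _ := integral_map hX.aemeasurable hf.aestronglyMeasurable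
  refine le_of_mul_le_mul_left ?_ (Nat.cast_pos.mpr (Fintype.card_pos (α := ι)))
  calc (Fintype.card ι : ℝ) * ∫ ω, f (X ω) ∂μ = ∑ i, ∫ ω, f (T i (X ω)) ∂μ := by
        simp [hcomp]
    _ = ∫ ω, ∑ i, f (T i (X ω)) ∂μ := (integral_finsetSum _ fun i _ => hint i).symm
    _ ≤ ∫ _, (Fintype.card ι : ℝ) * c ∂μ :=
        integral_mono (integrable_finsetSum _ fun i _ => hint i) (integrable_const _)
          fun ω => hsum (X ω)
    _ = Fintype.card ι * c := by simp

/-- The pool `combine (Zcal ω) (Z ω)` inherits exchangeability from `hexch`. -/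
theorem map_combine_comp_swap_eq {β γ : Type*} [MeasurableSpace β] [MeasurableSpace γ]
    {n₁ n₂ : ℕ} {Zprep : Ω → Fin n₁ → α × β} {Zcal : Ω → Fin n₂ → α × β} {Z : Ω → α × β}
    {T : Ω → γ} (hZprep : Measurable Zprep) (hZcal : Measurable Zcal) (hZ : Measurable Z)
    (hT : Measurable T)
    (hexch : ∀ π : Equiv.Perm ((Fin n₁ ⊕ Fin n₂) ⊕ Unit),
      μ.map (fun ω => ((fun i => Sum.elim (Sum.elim (Zprep ω) (Zcal ω)) (fun _ => Z ω) (π i)),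
          T ω))
        = μ.map (fun ω => ((fun i => Sum.elim (Sum.elim (Zprep ω) (Zcal ω)) (fun _ => Z ω) i),
          T ω)))
    (o : Option (Fin n₂)) :
    μ.map (fun ω => (Zprep ω, combine (Zcal ω) (Z ω) ∘ Equiv.swap none o, T ω))
      = μ.map (fun ω => (Zprep ω, combine (Zcal ω) (Z ω), T ω)) := by
  let poolIdx : Option (Fin n₂) → (Fin n₁ ⊕ Fin n₂) ⊕ Unit :=
    fun o => o.elim (.inr ()) (.inl ∘ .inr)
  have hinj : poolIdx.Injective := by
    rintro (_ | a) (_ | b) h <;> simp_all [poolIdx]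
  let Ψ : ((Fin n₁ ⊕ Fin n₂) ⊕ Unit → α × β) × γ →
      (Fin n₁ → α × β) × (Option (Fin n₂) → α × β) × γ :=
    fun vt => (fun i => vt.1 (.inl (.inl i)), vt.1 ∘ poolIdx, vt.2)
  have hΨ : Measurable Ψ := by fun_prop
  let V := fun ω (i : (Fin n₁ ⊕ Fin n₂) ⊕ Unit) =>
    Sum.elim (Sum.elim (Zprep ω) (Zcal ω)) (fun _ => Z ω) i
  have hV : Measurable V := measurable_pi_lambda _ fun i => by
    rcases i with (i | i) | _
    exacts [(measurable_pi_apply i).comp hZprep, (measurable_pi_apply i).comp hZcal, hZ]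
  set π := Equiv.swap (poolIdx none) (poolIdx o)
  have hVπ : Measurable fun ω => ((fun i => V ω (π i)), T ω) :=
    (measurable_pi_lambda _ fun i => (measurable_pi_apply (π i)).comp hV).prodMk hT
  -- the pool is `V ω ∘ poolIdx`, on which `π` acts as `Equiv.swap none o`
  have hΨπ : ∀ ω, (Zprep ω, combine (Zcal ω) (Z ω) ∘ Equiv.swap none o, T ω)
      = Ψ ((fun i => V ω (π i)), T ω) := fun ω => by
    refine Prod.ext (funext fun i => ?_) (Prod.ext (funext fun a => ?_) rfl)
    · have hne : Sum.inl (Sum.inl i) ≠ poolIdx none := by simp [poolIdx]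
      have hne' : Sum.inl (Sum.inl i) ≠ poolIdx o := by cases o <;> simp [poolIdx]
      simp only [Ψ, π, Equiv.swap_apply_of_ne_of_ne hne hne']
      rfl
    · simp only [Ψ, π, Function.comp_apply, hinj.swap_apply]
      cases Equiv.swap none o a <;> rfl
  have hΨV : ∀ ω, (Zprep ω, combine (Zcal ω) (Z ω), T ω) = Ψ (V ω, T ω) := fun ω =>
    Prod.ext rfl (Prod.ext (funext fun a => by cases a <;> rfl) rfl)
  simp only [hΨπ, hΨV]
  calc _ = (μ.map fun ω => ((fun i => V ω (π i)), T ω)).map Ψ := (Measure.map_map hΨ hVπ).symm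
    _ = (μ.map fun ω => (V ω, T ω)).map Ψ := congrArg (Measure.map Ψ) (hexch π)
    _ = _ := Measure.map_map hΨ (hV.prodMk hT)

theorem setIntegral_Icc_indicator_Icc {u : ℝ} (hu0 : 0 ≤ u) (hu1 : u ≤ 1) (c : ℝ) :
    ∫ s in Set.Icc 0 1, (Set.Icc 0 u).indicator (fun _ => c) s = u * c := by
  rw [setIntegral_indicator measurableSet_Icc,
    Set.inter_eq_right.mpr (Set.Icc_subset_Icc le_rfl hu1), setIntegral_const, smul_eq_mul,
    Measure.real, Real.volume_Icc, sub_zero, ENNReal.toReal_ofReal hu0]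

theorem setIntegral_Icc_indicator_le {E : Set ℝ} {N : ℝ → ℝ} {r : ℝ} (hr : 0 ≤ r)
    (hN : ∀ s ∈ E, ∀ t ∈ E, t * r ≤ N s) :
    ∫ s in Set.Icc 0 1, E.indicator (fun s => 1 / max 1 (N s)) s ≤ 1 / max 1 r := by
  set E' := E ∩ Set.Icc 0 1
  obtain hE | hE := E'.eq_empty_or_nonempty
  · have hzero : ∀ s ∈ Set.Icc (0 : ℝ) 1, E.indicator (fun s => 1 / max 1 (N s)) s = 0 :=
      fun s hs => Set.indicator_of_notMem (fun h => hE.subset ⟨h, hs⟩) _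
    rw [setIntegral_congr_fun measurableSet_Icc hzero, integral_zero]
    positivity
  -- on `E' ⊆ [0, u]` the integrand is at most `1 / max(1, u r)`
  set u := sSup E'
  have hbdd : BddAbove E' := ⟨1, fun t ht => ht.2.2⟩
  have hu0 : 0 ≤ u := hE.some_mem.2.1.trans (le_csSup hbdd hE.some_mem)
  have hu1 : u ≤ 1 := csSup_le hE fun t ht => ht.2.2
  have huN : ∀ s ∈ E, u * r ≤ N s := fun s hs => by
    rw [mul_comm, ← smul_eq_mul, ← Real.sSup_smul_of_nonneg hr]
    refine csSup_le hE.smul_set ?_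
    rintro _ ⟨t, ht, rfl⟩
    exact (mul_comm r t).trans_le (hN s hs t ht.1)
  have hc : (0 : ℝ) < max 1 (u * r) := lt_max_of_lt_left one_pos
  have hle : ∀ s ∈ Set.Icc (0 : ℝ) 1, E.indicator (fun s => 1 / max 1 (N s)) s
      ≤ (Set.Icc 0 u).indicator (fun _ => 1 / max 1 (u * r)) s := fun s hs => by
    by_cases hsE : s ∈ E
    · have hsu : s ∈ Set.Icc 0 u := ⟨hs.1, le_csSup hbdd ⟨hsE, hs⟩⟩
      rw [Set.indicator_of_mem hsE, Set.indicator_of_mem hsu]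
      exact one_div_le_one_div_of_le hc (max_le_max le_rfl (huN s hsE))
    · rw [Set.indicator_of_notMem hsE]
      exact Set.indicator_nonneg (fun _ _ => by positivity) s
  calc ∫ s in Set.Icc 0 1, E.indicator (fun s => 1 / max 1 (N s)) s
      ≤ ∫ s in Set.Icc 0 1, (Set.Icc 0 u).indicator (fun _ => 1 / max 1 (u * r)) s :=
        integral_mono_of_nonneg
          (.of_forall fun s => Set.indicator_nonneg (fun _ _ => by positivity) s)
          ((integrable_const _).indicator measurableSet_Icc)
          ((ae_restrict_iff' measurableSet_Icc).2 (.of_forall hle))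
    _ = u * (1 / max 1 (u * r)) := setIntegral_Icc_indicator_Icc hu0 hu1 _
    _ ≤ 1 / max 1 r := by
        rw [mul_one_div, div_le_div_iff₀ hc (lt_max_of_lt_left one_pos), one_mul,
          mul_max_of_nonneg _ _ hu0, mul_one]
        exact max_le_max hu1 le_rfl

end Probability

/-! ### Pruning -/

/-- The term of `j` in the false discovery proportion of `S(λ)`. -/
noncomputable def prunedShare (m : ℕ) (q : ℝ) (p R lam : Fin m → ℝ) (j : Fin m) : ℝ :=
  (prunedSet m q p R lam).indicator 1 j / ((max 1 (prunedSet m q p R lam).ncard : ℕ) : ℝ)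

/-- The bound on `prunedShare` that survives averaging over the pruning variable `λ_j`. -/
noncomputable def auxShare (m : ℕ) (q pj Rj : ℝ) : ℝ :=
  (if pj ≤ q * Rj / m then 1 else 0) / max 1 Rj

theorem ncard_inter_div_eq_sum_prunedShare {m : ℕ} {q : ℝ} (p R lam : Fin m → ℝ)
    (N : Set (Fin m)) :
    ((prunedSet m q p R lam ∩ N).ncard : ℝ) / ((max 1 (prunedSet m q p R lam).ncard : ℕ) : ℝ)
      = ∑ j, N.indicator (prunedShare m q p R lam) j := by
  classical
  have hterm : ∀ j, N.indicator (prunedShare m q p R lam) j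
      = (prunedSet m q p R lam ∩ N).indicator 1 j
        / ((max 1 (prunedSet m q p R lam).ncard : ℕ) : ℝ) := fun j => by
    by_cases hN : j ∈ N <;> by_cases hS : j ∈ prunedSet m q p R lam <;>
      simp [prunedShare, hN, hS]
  rw [Finset.sum_congr rfl fun j _ => hterm j, ← Finset.sum_div]
  congr 1
  simp only [Set.indicator_apply, Pi.one_apply, Finset.sum_boole, Set.ncard_eq_toFinset_card']
  congr 2
  ext
  simp

theorem sum_auxShare_rank_le {ι : Type*} [Fintype ι] (m : ℕ) {q : ℝ} (hq : 0 ≤ q) (s : ι → ℝ)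
    {r : ℝ} (hr : 0 ≤ r) :
    ∑ o, auxShare m q ({b | s b ≤ s o}.ncard / Fintype.card ι) r ≤ Fintype.card ι * (q / m) := by
  classical
  obtain hι | hι := isEmpty_or_nonempty ι
  · simp
  set N := (Fintype.card ι : ℝ)
  have hN : 0 < N := Nat.cast_pos.mpr Fintype.card_pos
  set T := N * (q * r / m)
  have hterm : ∀ o, auxShare m q ({b | s b ≤ s o}.ncard / N) r
      = (if ({b | s b ≤ s o}.ncard : ℝ) ≤ T then 1 else 0) / max 1 r := fun o => by
    simp only [auxShare, div_le_iff₀' hN]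
    rfl
  have hmax : 0 < max 1 r := lt_max_of_lt_left one_pos
  calc ∑ o, auxShare m q ({b | s b ≤ s o}.ncard / N) r
      = ({o | ({b | s b ≤ s o}.ncard : ℝ) ≤ T}.ncard : ℝ) / max 1 r := by
        rw [Finset.sum_congr rfl fun o _ => hterm o, ← Finset.sum_div, Finset.sum_boole,
          Set.ncard_eq_toFinset_card', Set.toFinset_ofPred]
    _ ≤ T / max 1 r := by
        gcongr
        exact ncard_rank_le_le s (by positivity)
    _ = N * (q / m) * (r / max 1 r) := by ring
    _ ≤ N * (q / m) := mul_le_of_le_one_right (by positivity)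
        (div_le_one_of_le₀ (le_max_right 1 r) hmax.le)

section Pruning

variable {m : ℕ} {q : ℝ} {p R : Fin m → ℝ}

theorem prunedThreshold_le_ncard (lam : Fin m → ℝ) :
    prunedThreshold m q p R lam ≤ (prunedSet m q p R lam).ncard :=
  Nat.findGreatest_spec (P := fun r : ℕ =>
    r ≤ {j : Fin m | p j ≤ q * R j / m ∧ lam j * R j ≤ (r : ℝ)}.ncard) (Nat.zero_le m)
    (Nat.zero_le _)

theorem mul_le_ncard_of_mem_prunedSet {lam : Fin m → ℝ} {j : Fin m}
    (hj : j ∈ prunedSet m q p R lam) : lam j * R j ≤ (prunedSet m q p R lam).ncard :=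
  hj.2.trans (by exact_mod_cast prunedThreshold_le_ncard lam)

theorem prunedThreshold_antitone (hR : 0 ≤ R) : Antitone (prunedThreshold m q p R) :=
  fun _ _ hlam => Nat.findGreatest_mono (fun _ hr => hr.trans (Set.ncard_le_ncard
    fun j hj => ⟨hj.1, (mul_le_mul_of_nonneg_right (hlam j) (hR j)).trans hj.2⟩)) le_rfl

theorem prunedSet_antitone (hR : 0 ≤ R) : Antitone (prunedSet m q p R) :=
  fun _ _ hlam j hj => ⟨hj.1, (mul_le_mul_of_nonneg_right (hlam j) (hR j)).trans
    (hj.2.trans (by exact_mod_cast prunedThreshold_antitone hR hlam))⟩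

theorem prunedShare_nonneg (lam : Fin m → ℝ) (j : Fin m) : 0 ≤ prunedShare m q p R lam j :=
  div_nonneg (Set.indicator_nonneg (fun _ _ => zero_le_one) j) (Nat.cast_nonneg _)

theorem norm_prunedShare_le_one (lam : Fin m → ℝ) (j : Fin m) :
    ‖prunedShare m q p R lam j‖ ≤ 1 := by
  rw [Real.norm_of_nonneg (prunedShare_nonneg lam j)]
  refine div_le_one_of_le₀ ?_ (Nat.cast_nonneg _)
  exact (Set.indicator_le_self' (fun _ _ => zero_le_one) j).trans (by simp)

theorem auxShare_nonneg (pj Rj : ℝ) : 0 ≤ auxShare m q pj Rj := by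
  unfold auxShare
  split_ifs <;> positivity

theorem norm_auxShare_le_one (pj Rj : ℝ) : ‖auxShare m q pj Rj‖ ≤ 1 := by
  rw [Real.norm_of_nonneg (auxShare_nonneg pj Rj)]
  refine div_le_one_of_le₀ ?_ (zero_le_one.trans (le_max_left _ _))
  split_ifs <;> simp

theorem prunedShare_one_le (j : Fin m) : prunedShare m q p R 1 j ≤ auxShare m q (p j) (R j) := by
  by_cases hj : j ∈ prunedSet m q p R 1
  · have hRj : R j ≤ (prunedSet m q p R 1).ncard := by
      simpa using mul_le_ncard_of_mem_prunedSet hj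
    rw [prunedShare, auxShare, Set.indicator_of_mem hj, if_pos hj.1, Nat.cast_max, Nat.cast_one]
    exact one_div_le_one_div_of_le (lt_max_of_lt_left one_pos) (max_le_max le_rfl hRj)
  · rw [prunedShare, Set.indicator_of_notMem hj, zero_div]
    exact auxShare_nonneg _ _

theorem measurable_prunedShare (j : Fin m) : Measurable fun lam => prunedShare m q p R lam j := by
  have hthr : Measurable (prunedThreshold m q p R) :=
    measurable_findGreatest fun r _ => measurableSet_le measurable_const
      (measurable_ncard_setOf fun l => (MeasurableSet.const _).inter
        (measurableSet_le ((measurable_pi_apply l).mul_const _) measurable_const))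
  have hmem : ∀ l, Measurable fun lam => l ∈ prunedSet m q p R lam := fun l =>
    measurableSet_setOfPred.mp <| (MeasurableSet.const _).inter
      (measurableSet_le ((measurable_pi_apply l).mul_const _) (measurable_from_nat.comp hthr))
  refine measurable_of_factorsThrough (measurable_pi_lambda _ hmem) fun lam lam' h => ?_
  have hS : prunedSet m q p R lam = prunedSet m q p R lam' :=
    Set.ext fun l => Iff.of_eq (congrFun h l)
  simp only [prunedShare, hS]

theorem setIntegral_prunedShare_le (hR : 0 ≤ R) {lam : ℝ → Fin m → ℝ} (hlam : Monotone lam)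
    {j : Fin m} (hj : ∀ s, lam s j = s) :
    ∫ s in Set.Icc 0 1, prunedShare m q p R (lam s) j ≤ auxShare m q (p j) (R j) := by
  set F := fun s => prunedSet m q p R (lam s)
  by_cases hP : p j ≤ q * R j / m
  · have hshare : ∀ s, prunedShare m q p R (lam s) j
        = {s | j ∈ F s}.indicator (fun s => 1 / max 1 ((F s).ncard : ℝ)) s := fun s => by
      by_cases h : j ∈ F s <;> simp [prunedShare, F, h]
    have hmem : ∀ s, j ∈ F s → s * R j ≤ (F s).ncard := fun s hs => by
      simpa only [hj] using mul_le_ncard_of_mem_prunedSet hs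
    rw [auxShare, if_pos hP]
    simp_rw [hshare]
    refine setIntegral_Icc_indicator_le (hR j) fun s hs t ht => ?_
    rcases le_total t s with hts | hst
    · exact (mul_le_mul_of_nonneg_right hts (hR j)).trans (hmem s hs)
    · exact (hmem t ht).trans (by
        exact_mod_cast Set.ncard_le_ncard ((prunedSet_antitone hR).comp_monotone hlam hst))
  · have hzero : ∀ s, prunedShare m q p R (lam s) j = 0 := fun s => by
      rw [prunedShare, Set.indicator_of_notMem (fun h => hP h.1), zero_div]
    simp [hzero, auxShare, hP]

theorem integral_prunedShare_diag_le (hR : 0 ≤ R) (j : Fin m) :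
    ∫ lam, prunedShare m q p R lam j
        ∂(Measure.map (fun s (_ : Fin m) => s) (volume.restrict (Set.Icc (0 : ℝ) 1)))
      ≤ auxShare m q (p j) (R j) := by
  rw [integral_map (by fun_prop) (measurable_prunedShare j).aestronglyMeasurable]
  exact setIntegral_prunedShare_le hR (fun _ _ hst _ => hst) fun _ => rfl

theorem integral_prunedShare_pi_le (hR : 0 ≤ R) (j : Fin m) :
    ∫ lam, prunedShare m q p R lam j ∂(Measure.pi fun _ => volume.restrict (Set.Icc (0 : ℝ) 1))
      ≤ auxShare m q (p j) (R j) := by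
  obtain ⟨n, rfl⟩ : ∃ n, m = n + 1 := ⟨m - 1, by have := j.pos; omega⟩
  set ν := volume.restrict (Set.Icc (0 : ℝ) 1)
  have : IsProbabilityMeasure ν := ⟨by simp [ν]⟩
  -- integrate out the `j`-th coordinate first, conditionally on the others
  let e := MeasurableEquiv.piFinSuccAbove (fun _ : Fin (n + 1) => ℝ) j
  rw [← (measurePreserving_piFinSuccAbove (fun _ => ν) j).symm.integral_comp' (f := e.symm),
    integral_prod_symm]
  · have hinner : ∀ y, ∫ s, prunedShare (n + 1) q p R (e.symm (s, y)) j ∂ν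
        ≤ auxShare (n + 1) q (p j) (R j) := fun y =>
      setIntegral_prunedShare_le hR (lam := fun s => e.symm (s, y))
        (fun s t hst => by simpa [e, Fin.insertNthEquiv, Fin.insertNth_le_iff] using hst)
        (by simp [e, Fin.insertNthEquiv])
    refine (integral_mono_of_nonneg (.of_forall fun y => integral_nonneg fun s =>
      prunedShare_nonneg _ j) (integrable_const _) (.of_forall hinner)).trans (by simp)
  · exact .of_bound ((measurable_prunedShare j).comp e.symm.measurable).aestronglyMeasurable 1
      (.of_forall fun _ => norm_prunedShare_le_one _ j)

end Pruning

/-- The deterministic, homogeneous and heterogeneous pruning options of OptCS. -/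
def PruningScheme {Ω α : Type*} [MeasurableSpace Ω] [MeasurableSpace α] {m : ℕ} (μ : Measure Ω)
    (D : Ω → α) (ξ : Fin m → Ω → ℝ) : Prop :=
  (∀ j ω, ξ j ω = 1) ∨
  ((∃ ξ₀ : Ω → ℝ, (∀ j, ξ j = ξ₀) ∧ Measure.map ξ₀ μ = volume.restrict (Set.Icc (0 : ℝ) 1)) ∧
    IndepFun (fun ω (j : Fin m) => ξ j ω) D μ) ∨
  ((Measure.map (fun ω (j : Fin m) => ξ j ω) μ
      = Measure.pi (fun _ : Fin m => volume.restrict (Set.Icc (0 : ℝ) 1))) ∧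
    IndepFun (fun ω (j : Fin m) => ξ j ω) D μ)

section PruningIntegral

variable {Ω α : Type*} [MeasurableSpace Ω] [MeasurableSpace α] {μ : Measure Ω}
  [IsProbabilityMeasure μ] {m : ℕ} {q : ℝ} {D : Ω → α} {p R : α → Fin m → ℝ}

theorem integral_indicator_prunedShare_le_of_indepFun (hD : Measurable D) {ξ : Ω → Fin m → ℝ}
    (hξ : Measurable ξ) (hind : IndepFun ξ D μ) (N : α → Set (Fin m)) (j : Fin m)
    (hg : Measurable fun z : α × (Fin m → ℝ) =>
      (N z.1).indicator (prunedShare m q (p z.1) (R z.1) z.2) j)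
    (hH : Measurable fun a => (N a).indicator (fun l => auxShare m q (p a l) (R a l)) j)
    (hlaw : ∀ a, ∫ lam, prunedShare m q (p a) (R a) lam j ∂(μ.map ξ)
      ≤ auxShare m q (p a j) (R a j)) :
    ∫ ω, (N (D ω)).indicator (prunedShare m q (p (D ω)) (R (D ω)) (ξ ω)) j ∂μ
      ≤ ∫ ω, (N (D ω)).indicator (fun l => auxShare m q (p (D ω) l) (R (D ω) l)) j ∂μ := by
  refine integral_comp_le_of_indepFun (g := fun z : α × (Fin m → ℝ) =>
      (N z.1).indicator (prunedShare m q (p z.1) (R z.1) z.2) j) hD hξ hind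
    (.of_bound hg.aestronglyMeasurable 1 (.of_forall fun z =>
      (norm_indicator_le_norm_self _ _).trans (norm_prunedShare_le_one _ _)))
    (.of_bound hH.aestronglyMeasurable 1 (.of_forall fun a =>
      (norm_indicator_le_norm_self _ _).trans (norm_auxShare_le_one _ _))) fun a => ?_
  by_cases hj : j ∈ N a
  · simpa only [Set.indicator_of_mem hj] using hlaw a
  · simp [Set.indicator_of_notMem hj]

theorem integral_indicator_prunedShare_le (hD : Measurable D) {ξ : Fin m → Ω → ℝ}
    (hξ : ∀ j, Measurable (ξ j))
    (hprune : PruningScheme μ D ξ)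
    (hR : ∀ a, 0 ≤ R a) (N : α → Set (Fin m)) (j : Fin m)
    (hg : Measurable fun z : α × (Fin m → ℝ) =>
      (N z.1).indicator (prunedShare m q (p z.1) (R z.1) z.2) j)
    (hH : Measurable fun a => (N a).indicator (fun l => auxShare m q (p a l) (R a l)) j) :
    ∫ ω, (N (D ω)).indicator (prunedShare m q (p (D ω)) (R (D ω)) fun l => ξ l ω) j ∂μ
      ≤ ∫ ω, (N (D ω)).indicator (fun l => auxShare m q (p (D ω) l) (R (D ω) l)) j ∂μ := by
  have hξv : Measurable fun ω (l : Fin m) => ξ l ω := measurable_pi_lambda _ hξ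
  rcases hprune with hdet | ⟨⟨ξ₀, hξ₀, hlaw⟩, hind⟩ | ⟨hlaw, hind⟩
  · have hone : ∀ ω, (fun l => ξ l ω) = 1 := fun ω => funext fun l => hdet l ω
    refine integral_mono (.of_bound (hg.comp (hD.prodMk hξv)).aestronglyMeasurable 1
      (.of_forall fun ω => (norm_indicator_le_norm_self _ _).trans (norm_prunedShare_le_one _ _)))
      (.of_bound (hH.comp hD).aestronglyMeasurable 1 (.of_forall fun ω =>
        (norm_indicator_le_norm_self _ _).trans (norm_auxShare_le_one _ _))) fun ω => ?_
    simp only [hone]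
    exact Set.indicator_le_indicator (prunedShare_one_le j)
  · have hdiag : μ.map (fun ω (l : Fin m) => ξ l ω)
        = Measure.map (fun s (_ : Fin m) => s) (volume.restrict (Set.Icc (0 : ℝ) 1)) := by
      rw [← hlaw, Measure.map_map (by fun_prop) (hξ₀ j ▸ hξ j)]
      simp only [hξ₀]
      rfl
    exact integral_indicator_prunedShare_le_of_indepFun hD hξv hind N j hg hH
      fun a => hdiag ▸ integral_prunedShare_diag_le (hR a) j
  · exact integral_indicator_prunedShare_le_of_indepFun hD hξv hind N j hg hH
      fun a => hlaw ▸ integral_prunedShare_pi_le (hR a) j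

end PruningIntegral

/-! ### Invariance of the OptCS-MSel quantities -/

section Msel

variable {n₁ n₂ m K : ℕ} {Vsc : Fin K → 𝓧 × ℝ → ℝ}

theorem mselPtilde_of_ne (cal : Fin n₂ → 𝓧 × ℝ) (test : Fin m → 𝓧 × ℝ) {j l : Fin m}
    (hl : l ≠ j) (k : Fin K) :
    mselPtilde n₂ m K Vsc cal test j k l
      = {o | Vsc k (combine cal (test j) o) ≤ Vsc k (test l)}.ncard / (n₂ + 1) := by
  classical
  rw [mselPtilde, if_neg hl, ncard_setOf_option]
  by_cases h : Vsc k (test j) ≤ Vsc k (test l) <;> simp [combine, h]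

theorem mselPtilde_congr {cal cal' : Fin n₂ → 𝓧 × ℝ} {test test' : Fin m → 𝓧 × ℝ} {j : Fin m}
    (e : Option (Fin n₂) ≃ Option (Fin n₂))
    (h : ∀ k, ∀ l ≠ j, ∀ o, Vsc k (combine cal (test j) o) ≤ Vsc k (test l)
      ↔ Vsc k (combine cal' (test' j) (e o)) ≤ Vsc k (test' l)) :
    mselPtilde n₂ m K Vsc cal test j = mselPtilde n₂ m K Vsc cal' test' j := by
  funext k l
  by_cases hl : l = j
  · simp [mselPtilde, hl]
  rw [mselPtilde_of_ne _ _ hl, mselPtilde_of_ne _ _ hl,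
    ← ncard_setOf_comp_equiv e (fun o => Vsc k (combine cal' (test' j) o) ≤ Vsc k (test' l))]
  simp only [h k l hl]

theorem mselKhat_congr {hK : 0 < K} {q : ℝ} {cal cal' : Fin n₂ → 𝓧 × ℝ}
    {test test' : Fin m → 𝓧 × ℝ} {j : Fin m}
    (h : mselPtilde n₂ m K Vsc cal test j = mselPtilde n₂ m K Vsc cal' test' j) :
    mselKhat n₂ m K hK q Vsc cal test j = mselKhat n₂ m K hK q Vsc cal' test' j := by
  simp only [mselKhat, mselSel, h]

theorem mselR_congr {hK : 0 < K} {q : ℝ} {prep prep' : Fin n₁ → 𝓧 × ℝ}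
    {cal cal' : Fin n₂ → 𝓧 × ℝ} {test test' : Fin m → 𝓧 × ℝ} {j : Fin m}
    (h : mselPtilde n₂ m K Vsc cal test j = mselPtilde n₂ m K Vsc cal' test' j) :
    mselR n₁ n₂ m K hK q Vsc prep cal test j = mselR n₁ n₂ m K hK q Vsc prep' cal' test' j := by
  simp only [mselR, mselSel, h, mselKhat_congr h]

theorem mselPtilde_update_clip {cfun : 𝓧 → ℝ}
    (hclip : ∀ k x y, y ≤ cfun x → Vsc k (x, y) = Vsc k (x, cfun x))
    (cal : Fin n₂ → 𝓧 × ℝ) (test : Fin m → 𝓧 × ℝ) (l : Fin m) {x : 𝓧} {y : ℝ}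
    (hy : y ≤ cfun x) :
    mselPtilde n₂ m K Vsc cal (Function.update test l (x, y))
      = mselPtilde n₂ m K Vsc cal (Function.update test l (x, cfun x)) := by
  have hscore : ∀ k l', Vsc k (Function.update test l (x, y) l')
      = Vsc k (Function.update test l (x, cfun x) l') := fun k l' => by
    by_cases hl' : l' = l
    · simp [hl', hclip k x y hy]
    · simp [Function.update_of_ne hl']
  funext j k l'
  simp only [mselPtilde, hscore]

end Msel

section Structure

variable {n₁ n₂ m K : ℕ} (hK : 0 < K) (q : ℝ) {Vsc : Fin K → 𝓧 × ℝ → ℝ}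

theorem combine_perm {α : Type*} (cal : Fin n₂ → α × ℝ) (z : α × ℝ)
    (π : Equiv.Perm (Option (Fin n₂))) :
    combine (fun i => combine cal z (π (some i))) (combine cal z (π none)) = combine cal z ∘ π := by
  funext o
  cases o <;> rfl

theorem mselPtilde_perm (cal : Fin n₂ → 𝓧 × ℝ) (test : Fin m → 𝓧 × ℝ) (j : Fin m)
    (π : Equiv.Perm (Option (Fin n₂))) :
    mselPtilde n₂ m K Vsc (fun i => combine cal (test j) (π (some i)))
        (Function.update test j (combine cal (test j) (π none))) j
      = mselPtilde n₂ m K Vsc cal test j := by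
  refine mselPtilde_congr π fun k l hl o => ?_
  rw [Function.update_self, combine_perm, Function.update_of_ne hl]
  rfl

theorem mselV_apply_coordIdx (prep : Fin n₁ → 𝓧 × ℝ) (cal : Fin n₂ → 𝓧 × ℝ)
    (test : Fin m → 𝓧 × ℝ) (j : Fin m) (o : Option (Fin n₂)) :
    mselV n₁ n₂ m K hK q Vsc prep cal test j (coordIdx j o)
      = Vsc (mselKhat n₂ m K hK q Vsc cal test j) (combine cal (test j) o) := by
  cases o <;> rfl

theorem mselV_monotoneNull {cfun : 𝓧 → ℝ}
    (hclip : ∀ k x y, y ≤ cfun x → Vsc k (x, y) = Vsc k (x, cfun x)) (j : Fin m) :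
    MonotoneNull cfun (mselV n₁ n₂ m K hK q Vsc) j := by
  refine ⟨fun prep cal test x y hy => le_of_eq ?_, fun prep cal test l _ x y hy => ?_⟩
  · simp only [mselV, Sum.elim_inr, Function.update_self]
    rw [mselKhat_congr (congrFun (mselPtilde_update_clip hclip cal test j hy) j), hclip _ x y hy]
  · simp only [mselV, Sum.elim_inr, Function.update_self]
    rw [mselKhat_congr (congrFun (mselPtilde_update_clip hclip cal test l hy) j), hclip _ x y hy]

theorem mselV_permEquivariant : PermEquivariant (mselV n₁ n₂ m K hK q Vsc) := by
  intro j prep cal test π i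
  rw [mselV_apply_coordIdx, mselV_apply_coordIdx, mselKhat_congr (mselPtilde_perm cal test j π),
    Function.update_self, combine_perm]
  rfl

theorem mselR_permInvariantNull {cfun : 𝓧 → ℝ}
    (hclip : ∀ k x y, y ≤ cfun x → Vsc k (x, y) = Vsc k (x, cfun x)) (j : Fin m) :
    PermInvariantNull cfun (mselR n₁ n₂ m K hK q Vsc) j :=
  ⟨mselR n₁ n₂ m K hK q Vsc, fun _ cal test _ _ hy =>
    (mselR_congr (congrFun (mselPtilde_update_clip hclip cal test j hy) j)).le,
    fun _ cal test π => mselR_congr (mselPtilde_perm cal test j π)⟩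

end Structure

def scorePattern {n₂ m K : ℕ} (Vsc : Fin K → 𝓧 × ℝ → ℝ) (cal : Fin n₂ → 𝓧 × ℝ)
    (test : Fin m → 𝓧 × ℝ) : Fin K → Fin n₂ ⊕ Fin m → Fin n₂ ⊕ Fin m → Prop :=
  fun k a b => Vsc k (Sum.elim cal test a) ≤ Vsc k (Sum.elim cal test b)

section Pattern

variable {n₁ n₂ m K : ℕ} (hK : 0 < K) (q : ℝ) {Vsc : Fin K → 𝓧 × ℝ → ℝ}
  {cal cal' : Fin n₂ → 𝓧 × ℝ} {test test' : Fin m → 𝓧 × ℝ}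

theorem mselPtilde_eq_of_scorePattern_eq
    (h : scorePattern Vsc cal test = scorePattern Vsc cal' test') :
    mselPtilde n₂ m K Vsc cal test = mselPtilde n₂ m K Vsc cal' test' := by
  have hcal : ∀ k i l, (Vsc k (cal i) ≤ Vsc k (test l)) = (Vsc k (cal' i) ≤ Vsc k (test' l)) :=
    fun k i l => congrFun (congrFun (congrFun h k) (.inl i)) (.inr l)
  have htest : ∀ k l l',
      (Vsc k (test l) ≤ Vsc k (test l')) = (Vsc k (test' l) ≤ Vsc k (test' l')) :=
    fun k l l' => congrFun (congrFun (congrFun h k) (.inr l)) (.inr l')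
  funext j k l
  simp only [mselPtilde, hcal, htest]

theorem pvals_mselV_eq_of_scorePattern_eq
    (h : scorePattern Vsc cal test = scorePattern Vsc cal' test') (prep prep' : Fin n₁ → 𝓧 × ℝ) :
    pvals (mselV n₁ n₂ m K hK q Vsc) prep cal test
      = pvals (mselV n₁ n₂ m K hK q Vsc) prep' cal' test' := by
  have hcal : ∀ k i l, (Vsc k (cal i) ≤ Vsc k (test l)) = (Vsc k (cal' i) ≤ Vsc k (test' l)) :=
    fun k i l => congrFun (congrFun (congrFun h k) (.inl i)) (.inr l)
  funext j
  simp only [pvals, mselV, Sum.elim_inl, Sum.elim_inr,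
    mselKhat_congr (congrFun (mselPtilde_eq_of_scorePattern_eq h) j), hcal]

theorem mselR_eq_of_scorePattern_eq
    (h : scorePattern Vsc cal test = scorePattern Vsc cal' test') (prep prep' : Fin n₁ → 𝓧 × ℝ) :
    mselR n₁ n₂ m K hK q Vsc prep cal test = mselR n₁ n₂ m K hK q Vsc prep' cal' test' :=
  funext fun j => mselR_congr (congrFun (mselPtilde_eq_of_scorePattern_eq h) j)

theorem measurable_scorePattern [MeasurableSpace 𝓧] {β : Type*} [MeasurableSpace β]
    (hVsc : ∀ k, Measurable (Vsc k)) {cal : β → Fin n₂ → 𝓧 × ℝ} {test : β → Fin m → 𝓧 × ℝ}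
    (hcal : Measurable cal) (htest : Measurable test) :
    Measurable fun b => scorePattern Vsc (cal b) (test b) := by
  have hpt : ∀ a, Measurable fun b => Sum.elim (cal b) (test b) a := fun a => by
    cases a with
    | inl i => exact (measurable_pi_apply i).comp hcal
    | inr l => exact (measurable_pi_apply l).comp htest
  exact measurable_pi_lambda _ fun k => measurable_pi_lambda _ fun a =>
    measurable_pi_lambda _ fun a' => measurableSet_setOfPred.mp
      (measurableSet_le ((hVsc k).comp (hpt a)) ((hVsc k).comp (hpt a')))

end Pattern

/-! ### Swapping the test point into the calibration set -/

section Core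

variable {n₁ n₂ m K : ℕ} (hK : 0 < K) (q : ℝ) (Vsc : Fin K → 𝓧 × ℝ → ℝ) (cfun : 𝓧 → ℝ)

/-- The bound `1{null} · 1{p_j ≤ q R̂_j / m} / max(1, R̂_j)` for the configuration whose
calibration points are `u (some i)` and whose `j`-th test point is `u none`, the latter observed
through its threshold; `t` are the (observed) other test points. -/
noncomputable def nullShare (j : Fin m) (prep : Fin n₁ → 𝓧 × ℝ) (u : Option (Fin n₂) → 𝓧 × ℝ)
    (t : {l // l ≠ j} → 𝓧 × ℝ) : ℝ :=
  if (u none).2 ≤ cfun (u none).1 then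
    let test := insertAt j ((u none).1, cfun (u none).1) t
    auxShare m q (pvals (mselV n₁ n₂ m K hK q Vsc) prep (u ∘ some) test j)
      (mselR n₁ n₂ m K hK q Vsc prep (u ∘ some) test j)
  else 0

variable {Vsc cfun}

theorem pvals_mselV (prep : Fin n₁ → 𝓧 × ℝ) (cal : Fin n₂ → 𝓧 × ℝ) (test : Fin m → 𝓧 × ℝ)
    (j : Fin m) :
    pvals (mselV n₁ n₂ m K hK q Vsc) prep cal test j
      = {o | Vsc (mselKhat n₂ m K hK q Vsc cal test j) (combine cal (test j) o)
          ≤ Vsc (mselKhat n₂ m K hK q Vsc cal test j) (test j)}.ncard / (n₂ + 1) := by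
  classical
  rw [pvals, ncard_setOf_option]
  simp [mselV, combine]
  ring

theorem score_combine_swap (hclip : ∀ k x y, y ≤ cfun x → Vsc k (x, y) = Vsc k (x, cfun x))
    {j : Fin m} {u : Option (Fin n₂) → 𝓧 × ℝ} {o : Option (Fin n₂)}
    (ho : (u o).2 ≤ cfun (u o).1) (t : {l // l ≠ j} → 𝓧 × ℝ) (k : Fin K) (a : Option (Fin n₂)) :
    Vsc k (combine ((u ∘ Equiv.swap none o) ∘ some) (insertAt j ((u o).1, cfun (u o).1) t j) a)
      = Vsc k (u (Equiv.swap none o a)) := by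
  cases a with
  | none => simp [combine, ← hclip k _ _ ho]
  | some i => rfl

theorem mselPtilde_swap (hclip : ∀ k x y, y ≤ cfun x → Vsc k (x, y) = Vsc k (x, cfun x))
    {j : Fin m} {u : Option (Fin n₂) → 𝓧 × ℝ} {o : Option (Fin n₂)}
    (ho : (u o).2 ≤ cfun (u o).1) (t : {l // l ≠ j} → 𝓧 × ℝ) :
    mselPtilde n₂ m K Vsc ((u ∘ Equiv.swap none o) ∘ some) (insertAt j ((u o).1, cfun (u o).1) t) j
      = mselPtilde n₂ m K Vsc (u ∘ some) (insertAt j (u none) t) j := by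
  refine mselPtilde_congr (Equiv.swap none o) fun k l hl a => ?_
  rw [score_combine_swap hclip ho, insertAt_of_ne hl, insertAt_of_ne hl, insertAt_self]
  cases Equiv.swap none o a <;> rfl

theorem nullShare_swap_le (hclip : ∀ k x y, y ≤ cfun x → Vsc k (x, y) = Vsc k (x, cfun x))
    (j : Fin m) (prep : Fin n₁ → 𝓧 × ℝ) (u : Option (Fin n₂) → 𝓧 × ℝ)
    (t : {l // l ≠ j} → 𝓧 × ℝ) (o : Option (Fin n₂)) :
    nullShare hK q Vsc cfun j prep (u ∘ Equiv.swap none o) t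
      ≤ auxShare m q
        ({b | Vsc (mselKhat n₂ m K hK q Vsc (u ∘ some) (insertAt j (u none) t) j) (u b)
          ≤ Vsc (mselKhat n₂ m K hK q Vsc (u ∘ some) (insertAt j (u none) t) j) (u o)}.ncard
          / Fintype.card (Option (Fin n₂)))
        (mselR n₁ n₂ m K hK q Vsc prep (u ∘ some) (insertAt j (u none) t) j) := by
  unfold nullShare
  simp only [Function.comp_apply, Equiv.swap_apply_left]
  split_ifs with ho
  · have hP := mselPtilde_swap hclip ho t
    rw [pvals_mselV, mselKhat_congr hP, mselR_congr (prep' := prep) hP]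
    have htest : ∀ k, Vsc k (insertAt j ((u o).1, cfun (u o).1) t j) = Vsc k (u o) := fun k => by
      rw [insertAt_self, ← hclip k _ _ ho]
    simp only [score_combine_swap hclip ho, htest, Fintype.card_option, Fintype.card_fin,
      Nat.cast_add, Nat.cast_one]
    rw [ncard_setOf_comp_equiv (Equiv.swap none o) (fun b => Vsc _ (u b) ≤ Vsc _ (u o))]
  · exact auxShare_nonneg _ _

theorem measurable_nullShare [MeasurableSpace 𝓧] (hVsc : ∀ k, Measurable (Vsc k))
    (hcfun : Measurable cfun) (j : Fin m) :
    Measurable fun z : (Fin n₁ → 𝓧 × ℝ) × (Option (Fin n₂) → 𝓧 × ℝ) × ({l // l ≠ j} → 𝓧 × ℝ) =>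
      nullShare hK q Vsc cfun j z.1 z.2.1 z.2.2 := by
  have hu : Measurable fun z : (Fin n₁ → 𝓧 × ℝ) × (Option (Fin n₂) → 𝓧 × ℝ)
      × ({l // l ≠ j} → 𝓧 × ℝ) => z.2.1 none := by fun_prop
  have htest := (measurable_insertAt j).comp
    (((measurable_fst.comp hu).prodMk (hcfun.comp (measurable_fst.comp hu))).prodMk
      measurable_snd.snd)
  refine measurable_of_factorsThrough (c := fun z => (scorePattern Vsc (z.2.1 ∘ some)
      (insertAt j ((z.2.1 none).1, cfun (z.2.1 none).1) z.2.2),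
      (z.2.1 none).2 ≤ cfun (z.2.1 none).1))
    ((measurable_scorePattern hVsc (by fun_prop) htest).prodMk (measurableSet_setOfPred.mp
      (measurableSet_le (measurable_snd.comp hu) (hcfun.comp (measurable_fst.comp hu)))))
    fun z z' h => ?_
  simp only [Prod.mk.injEq] at h
  obtain ⟨hpat, hnull⟩ := h
  simp only [nullShare, hnull, pvals_mselV_eq_of_scorePattern_eq hK q hpat z.1 z'.1,
    mselR_eq_of_scorePattern_eq hK q hpat z.1 z'.1]

theorem norm_nullShare_le_one (j : Fin m) (prep : Fin n₁ → 𝓧 × ℝ)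
    (u : Option (Fin n₂) → 𝓧 × ℝ) (t : {l // l ≠ j} → 𝓧 × ℝ) :
    ‖nullShare hK q Vsc cfun j prep u t‖ ≤ 1 := by
  unfold nullShare
  split_ifs
  exacts [norm_auxShare_le_one _ _, by simp]

theorem sum_nullShare_swap_le (hclip : ∀ k x y, y ≤ cfun x → Vsc k (x, y) = Vsc k (x, cfun x))
    {q : ℝ} (hq : 0 ≤ q) (j : Fin m) (prep : Fin n₁ → 𝓧 × ℝ) (u : Option (Fin n₂) → 𝓧 × ℝ)
    (t : {l // l ≠ j} → 𝓧 × ℝ) :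
    ∑ o, nullShare hK q Vsc cfun j prep (u ∘ Equiv.swap none o) t
      ≤ Fintype.card (Option (Fin n₂)) * (q / m) :=
  (Finset.sum_le_sum fun o _ => nullShare_swap_le hK q hclip j prep u t o).trans
    (sum_auxShare_rank_le m hq _ (Nat.cast_nonneg _))

theorem integral_nullShare_le [MeasurableSpace 𝓧] {Ω : Type*} [MeasurableSpace Ω]
    {μ : Measure Ω} [IsProbabilityMeasure μ]
    (hclip : ∀ k x y, y ≤ cfun x → Vsc k (x, y) = Vsc k (x, cfun x)) {q : ℝ} (hq : 0 ≤ q)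
    (hVsc : ∀ k, Measurable (Vsc k)) (hcfun : Measurable cfun) (j : Fin m)
    {Zprep : Ω → Fin n₁ → 𝓧 × ℝ} {Zcal : Ω → Fin n₂ → 𝓧 × ℝ} {Z : Ω → 𝓧 × ℝ}
    {T : Ω → {l // l ≠ j} → 𝓧 × ℝ} (hZprep : Measurable Zprep) (hZcal : Measurable Zcal)
    (hZ : Measurable Z) (hT : Measurable T)
    (hexch : ∀ π : Equiv.Perm ((Fin n₁ ⊕ Fin n₂) ⊕ Unit),
      μ.map (fun ω => ((fun i => Sum.elim (Sum.elim (Zprep ω) (Zcal ω)) (fun _ => Z ω) (π i)),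
          T ω))
        = μ.map (fun ω => ((fun i => Sum.elim (Sum.elim (Zprep ω) (Zcal ω)) (fun _ => Z ω) i),
          T ω))) :
    ∫ ω, nullShare hK q Vsc cfun j (Zprep ω) (combine (Zcal ω) (Z ω)) (T ω) ∂μ ≤ q / m :=
  integral_le_of_sum_comp_le (X := fun ω => (Zprep ω, combine (Zcal ω) (Z ω), T ω))
    (hZprep.prodMk ((measurable_combine.comp (hZcal.prodMk hZ)).prodMk hT))
    (T := fun o z => (z.1, z.2.1 ∘ Equiv.swap none o, z.2.2)) (fun o => by fun_prop)
    (map_combine_comp_swap_eq hZprep hZcal hZ hT hexch)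
    (.of_bound (measurable_nullShare hK q hVsc hcfun j).aestronglyMeasurable 1
      (.of_forall fun z => norm_nullShare_le_one hK q j _ _ _))
    fun z => sum_nullShare_swap_le hK hclip hq j z.1 z.2.1 z.2.2

end Core

/-- The data: preparatory points, calibration points, test covariates and test labels. -/
abbrev Sample (𝓧 : Type*) (n₁ n₂ m : ℕ) :=
  (Fin n₁ → 𝓧 × ℝ) × (Fin n₂ → 𝓧 × ℝ) × (Fin m → 𝓧) × (Fin m → ℝ)

section Observed

variable {n₁ n₂ m K : ℕ} (hK : 0 < K) (q : ℝ) (Vsc : Fin K → 𝓧 × ℝ → ℝ) (cfun : 𝓧 → ℝ)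

noncomputable def observedPvals (D : Sample 𝓧 n₁ n₂ m) : Fin m → ℝ :=
  pvals (mselV n₁ n₂ m K hK q Vsc) D.1 D.2.1 fun l => (D.2.2.1 l, cfun (D.2.2.1 l))

noncomputable def observedR (D : Sample 𝓧 n₁ n₂ m) : Fin m → ℝ :=
  mselR n₁ n₂ m K hK q Vsc D.1 D.2.1 fun l => (D.2.2.1 l, cfun (D.2.2.1 l))

def nullSet (D : Sample 𝓧 n₁ n₂ m) : Set (Fin m) :=
  {l | D.2.2.2 l ≤ cfun (D.2.2.1 l)}

theorem indicator_auxShare_eq_nullShare (D : Sample 𝓧 n₁ n₂ m) (j : Fin m) :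
    (nullSet cfun D).indicator
        (fun l => auxShare m q (observedPvals hK q Vsc cfun D l) (observedR hK q Vsc cfun D l)) j
      = nullShare hK q Vsc cfun j D.1 (combine D.2.1 (D.2.2.1 j, D.2.2.2 j))
          fun l => (D.2.2.1 l, cfun (D.2.2.1 l)) := by
  have htest : insertAt j (D.2.2.1 j, cfun (D.2.2.1 j)) (fun l => (D.2.2.1 l, cfun (D.2.2.1 l)))
      = fun l => (D.2.2.1 l, cfun (D.2.2.1 l)) := funext fun l => by
    by_cases hl : l = j
    · subst hl
      exact insertAt_self _ _ _
    · exact insertAt_of_ne hl _ _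
  by_cases hj : D.2.2.2 j ≤ cfun (D.2.2.1 j)
  · rw [Set.indicator_of_mem (show j ∈ nullSet cfun D from hj)]
    simp only [nullShare, combine, Option.elim, hj, if_true, htest]
    rfl
  · rw [Set.indicator_of_notMem (show j ∉ nullSet cfun D from hj)]
    simp [nullShare, combine, hj]

variable [MeasurableSpace 𝓧] {Vsc cfun}

theorem measurable_indicator_auxShare (hVsc : ∀ k, Measurable (Vsc k)) (hcfun : Measurable cfun)
    (j : Fin m) :
    Measurable fun D : Sample 𝓧 n₁ n₂ m => (nullSet cfun D).indicator
      (fun l => auxShare m q (observedPvals hK q Vsc cfun D l) (observedR hK q Vsc cfun D l))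
      j := by
  simp_rw [indicator_auxShare_eq_nullShare]
  refine (measurable_nullShare hK q hVsc hcfun j).comp (measurable_fst.prodMk
    ((measurable_combine.comp (measurable_snd.fst.prodMk ?_)).prodMk ?_)) <;> fun_prop

theorem measurable_indicator_prunedShare (hVsc : ∀ k, Measurable (Vsc k))
    (hcfun : Measurable cfun) (j : Fin m) :
    Measurable fun z : Sample 𝓧 n₁ n₂ m × (Fin m → ℝ) => (nullSet cfun z.1).indicator
      (prunedShare m q (observedPvals hK q Vsc cfun z.1) (observedR hK q Vsc cfun z.1) z.2) j := by
  refine measurable_prod_of_factorsThrough (c := fun D : Sample 𝓧 n₁ n₂ m =>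
      (scorePattern Vsc D.2.1 fun l => (D.2.2.1 l, cfun (D.2.2.1 l)), fun l => l ∈ nullSet cfun D))
    ((measurable_scorePattern (cal := fun D : Sample 𝓧 n₁ n₂ m => D.2.1)
      (test := fun D l => (D.2.2.1 l, cfun (D.2.2.1 l))) hVsc (by fun_prop) (by fun_prop)).prodMk
      (measurable_pi_lambda _ fun l => measurableSet_setOfPred.mp (measurableSet_le
        (f := fun D : Sample 𝓧 n₁ n₂ m => D.2.2.2 l) (g := fun D => cfun (D.2.2.1 l))
        (by fun_prop) (by fun_prop)))) (fun lam D D' h => ?_) fun D => ?_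
  · simp only [Prod.mk.injEq] at h
    obtain ⟨hpat, hnull⟩ := h
    have hN : nullSet cfun D = nullSet cfun D' := Set.ext fun l => Iff.of_eq (congrFun hnull l)
    simp only [observedPvals, observedR, hN, pvals_mselV_eq_of_scorePattern_eq hK q hpat D.1 D'.1,
      mselR_eq_of_scorePattern_eq hK q hpat D.1 D'.1]
  · by_cases hj : j ∈ nullSet cfun D
    · simpa only [Set.indicator_of_mem hj] using measurable_prunedShare j
    · simp only [Set.indicator_of_notMem hj, measurable_const]

theorem integral_indicator_prunedShare_observed_le {Ω : Type*} [MeasurableSpace Ω]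
    {μ : Measure Ω} [IsProbabilityMeasure μ]
    (hclip : ∀ k x y, y ≤ cfun x → Vsc k (x, y) = Vsc k (x, cfun x)) (hq : 0 ≤ q)
    (hVsc : ∀ k, Measurable (Vsc k)) (hcfun : Measurable cfun) {D : Ω → Sample 𝓧 n₁ n₂ m}
    (hD : Measurable D) {ξ : Fin m → Ω → ℝ} (hξ : ∀ j, Measurable (ξ j))
    (hprune : PruningScheme μ D ξ) (j : Fin m)
    (hexch : ∀ π : Equiv.Perm ((Fin n₁ ⊕ Fin n₂) ⊕ Unit),
      μ.map (fun ω => ((fun i => Sum.elim (Sum.elim (D ω).1 (D ω).2.1)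
          (fun _ => ((D ω).2.2.1 j, (D ω).2.2.2 j)) (π i)),
          fun l : {l // l ≠ j} => ((D ω).2.2.1 l, cfun ((D ω).2.2.1 l))))
        = μ.map (fun ω => ((fun i => Sum.elim (Sum.elim (D ω).1 (D ω).2.1)
          (fun _ => ((D ω).2.2.1 j, (D ω).2.2.2 j)) i),
          fun l : {l // l ≠ j} => ((D ω).2.2.1 l, cfun ((D ω).2.2.1 l))))) :
    ∫ ω, (nullSet cfun (D ω)).indicator (prunedShare m q (observedPvals hK q Vsc cfun (D ω))
        (observedR hK q Vsc cfun (D ω)) fun l => ξ l ω) j ∂μ ≤ q / m := by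
  refine (integral_indicator_prunedShare_le hD hξ hprune (p := observedPvals hK q Vsc cfun)
    (R := observedR hK q Vsc cfun) (fun _ _ => Nat.cast_nonneg _) (nullSet cfun) j
    (measurable_indicator_prunedShare hK q hVsc hcfun j) (measurable_indicator_auxShare hK q hVsc hcfun j)).trans ?_
  simp only [indicator_auxShare_eq_nullShare]
  exact integral_nullShare_le hK hclip hq hVsc hcfun j (by fun_prop) (by fun_prop) (by fun_prop)
    (by fun_prop) hexch

end Observed

theorem optcs_msel_valid_general
    {Ω : Type*} [MeasurableSpace Ω] (μ : Measure Ω) [IsProbabilityMeasure μ]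
    [MeasurableSpace 𝓧]
    (n₁ n₂ m K : ℕ) (hK : 0 < K) (q : ℝ) (hq : q ∈ Set.Ioo (0 : ℝ) 1)
    (cfun : 𝓧 → ℝ) (hcfun : Measurable cfun)
    (Vsc : Fin K → 𝓧 × ℝ → ℝ)
    (hVscMeas : ∀ k, Measurable (Vsc k))
    -- each candidate score is of clipped type
    (hVscClip : ∀ (k : Fin K) (x : 𝓧) (y : ℝ), y ≤ cfun x → Vsc k (x, y) = Vsc k (x, cfun x))
    -- the data and pruning variables
    (Zprep : Fin n₁ → Ω → 𝓧 × ℝ) (Zcal : Fin n₂ → Ω → 𝓧 × ℝ)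
    (Xt : Fin m → Ω → 𝓧) (Yt : Fin m → Ω → ℝ) (ξ : Fin m → Ω → ℝ)
    (hZprep : ∀ i, Measurable (Zprep i)) (hZcal : ∀ i, Measurable (Zcal i))
    (hXt : ∀ j, Measurable (Xt j)) (hYt : ∀ j, Measurable (Yt j))
    (hξmeas : ∀ j, Measurable (ξ j))
    (hprune :
      (∀ j ω, ξ j ω = 1) ∨
      ((∃ ξ₀ : Ω → ℝ, (∀ j, ξ j = ξ₀) ∧
          Measure.map ξ₀ μ = volume.restrict (Set.Icc (0 : ℝ) 1)) ∧
        IndepFun (fun ω (j : Fin m) => ξ j ω)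
          (fun ω => (fun i => Zprep i ω, fun i => Zcal i ω,
            fun j => Xt j ω, fun j => Yt j ω)) μ) ∨
      ((Measure.map (fun ω (j : Fin m) => ξ j ω) μ
          = Measure.pi (fun _ : Fin m => volume.restrict (Set.Icc (0 : ℝ) 1))) ∧
        IndepFun (fun ω (j : Fin m) => ξ j ω)
          (fun ω => (fun i => Zprep i ω, fun i => Zcal i ω,
            fun j => Xt j ω, fun j => Yt j ω)) μ)) :
    -- the OptCS-MSel functionals satisfy the three defining properties
    (∀ j : Fin m, MonotoneNull cfun (mselV n₁ n₂ m K hK q Vsc) j) ∧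
    PermEquivariant (mselV n₁ n₂ m K hK q Vsc) ∧
    (∀ j : Fin m, PermInvariantNull cfun (mselR n₁ n₂ m K hK q Vsc) j) ∧
    -- consequently, under exchangeability, FDR ≤ q
    ((∀ j : Fin m, ∀ π : Equiv.Perm ((Fin n₁ ⊕ Fin n₂) ⊕ Unit),
        Measure.map (fun ω =>
            ((fun i : (Fin n₁ ⊕ Fin n₂) ⊕ Unit =>
                Sum.elim (Sum.elim (fun i' => Zprep i' ω) (fun i' => Zcal i' ω))
                  (fun _ => (Xt j ω, Yt j ω)) (π i)),
              fun l : {l : Fin m // l ≠ j} => (Xt l.1 ω, cfun (Xt l.1 ω)))) μ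
          = Measure.map (fun ω =>
            ((fun i : (Fin n₁ ⊕ Fin n₂) ⊕ Unit =>
                Sum.elim (Sum.elim (fun i' => Zprep i' ω) (fun i' => Zcal i' ω))
                  (fun _ => (Xt j ω, Yt j ω)) i),
              fun l : {l : Fin m // l ≠ j} => (Xt l.1 ω, cfun (Xt l.1 ω)))) μ) →
      ∫ ω,
          (Set.ncard
              (prunedSet m q
                  (pvals (mselV n₁ n₂ m K hK q Vsc) (fun i => Zprep i ω)
                    (fun i => Zcal i ω) (fun l => (Xt l ω, cfun (Xt l ω))))
                  (fun j => mselR n₁ n₂ m K hK q Vsc (fun i => Zprep i ω)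
                    (fun i => Zcal i ω) (fun l => (Xt l ω, cfun (Xt l ω))) j)
                  (fun j => ξ j ω) ∩
                {j : Fin m | Yt j ω ≤ cfun (Xt j ω)}) : ℝ) /
            ((max 1 (Set.ncard
              (prunedSet m q
                  (pvals (mselV n₁ n₂ m K hK q Vsc) (fun i => Zprep i ω)
                    (fun i => Zcal i ω) (fun l => (Xt l ω, cfun (Xt l ω))))
                  (fun j => mselR n₁ n₂ m K hK q Vsc (fun i => Zprep i ω)
                    (fun i => Zcal i ω) (fun l => (Xt l ω, cfun (Xt l ω))) j)
                  (fun j => ξ j ω))) : ℕ) : ℝ) ∂μ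
        ≤ q) := by
  refine ⟨fun j => mselV_monotoneNull hK q hVscClip j, mselV_permEquivariant hK q,
    fun j => mselR_permInvariantNull hK q hVscClip j, fun hexch => ?_⟩
  set D : Ω → Sample 𝓧 n₁ n₂ m :=
    fun ω => (fun i => Zprep i ω, fun i => Zcal i ω, fun l => Xt l ω, fun l => Yt l ω)
  have hD : Measurable D := by fun_prop
  set F := fun j ω => (nullSet cfun (D ω)).indicator (prunedShare m q
    (observedPvals hK q Vsc cfun (D ω)) (observedR hK q Vsc cfun (D ω)) fun l => ξ l ω) j
  have hF : ∀ j, Integrable (F j) μ := fun j =>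
    .of_bound ((measurable_indicator_prunedShare hK q hVscMeas hcfun j).comp
      (hD.prodMk (measurable_pi_lambda _ hξmeas))).aestronglyMeasurable 1
      (.of_forall fun ω => (norm_indicator_le_norm_self _ _).trans (norm_prunedShare_le_one _ _))
  calc _ = ∫ ω, ∑ j, F j ω ∂μ :=
        integral_congr_ae (.of_forall fun ω => ncard_inter_div_eq_sum_prunedShare _ _ _ _)
    _ = ∑ j, ∫ ω, F j ω ∂μ := integral_finsetSum _ fun j _ => hF j
    _ ≤ ∑ j : Fin m, q / m := Finset.sum_le_sum fun j _ =>
        integral_indicator_prunedShare_observed_le hK q hVscClip hq.1.le hVscMeas hcfun hD hξmeas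
          hprune j (hexch j)
    _ ≤ q := by
        rw [Finset.sum_const, Finset.card_univ, Fintype.card_fin, nsmul_eq_mul]
        rcases Nat.eq_zero_or_pos m with rfl | hm
        · simpa using hq.1.le
        · exact (mul_div_cancel₀ q (by positivity)).le

/-- **validity of OptCS-MSel.**  With K pre-trained monotone clipped score
functions, the OptCS-MSel score-generating functional is monotone for each null and
permutation equivariant, and its auxiliary selection function is permutation invariant under
each null.  Consequently, if for every j the labeled data together with the j-th test point
are exchangeable given the other test points, the output of OptCS-MSel (under any of the three
pruning options) has FDR ≤ q. -/
theorem optcs_msel_valid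
    {Ω : Type*} [MeasurableSpace Ω] (μ : Measure Ω) [IsProbabilityMeasure μ]
    [MeasurableSpace 𝓧]
    (n₁ n₂ m K : ℕ) (hK : 0 < K) (q : ℝ) (hq : q ∈ Set.Ioo (0 : ℝ) 1)
    (cfun : 𝓧 → ℝ) (hcfun : Measurable cfun)
    (Vsc : Fin K → 𝓧 × ℝ → ℝ)
    (hVscMeas : ∀ k, Measurable (Vsc k))
    -- each candidate score is monotone in y
    (hVscMono : ∀ (k : Fin K) (x : 𝓧), Monotone fun y : ℝ => Vsc k (x, y))
    -- each candidate score is of clipped type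
    (hVscClip : ∀ (k : Fin K) (x : 𝓧) (y : ℝ), y ≤ cfun x → Vsc k (x, y) = Vsc k (x, cfun x))
    -- the data and pruning variables
    (Zprep : Fin n₁ → Ω → 𝓧 × ℝ) (Zcal : Fin n₂ → Ω → 𝓧 × ℝ)
    (Xt : Fin m → Ω → 𝓧) (Yt : Fin m → Ω → ℝ) (ξ : Fin m → Ω → ℝ)
    (hZprep : ∀ i, Measurable (Zprep i)) (hZcal : ∀ i, Measurable (Zcal i))
    (hXt : ∀ j, Measurable (Xt j)) (hYt : ∀ j, Measurable (Yt j))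
    (hξmeas : ∀ j, Measurable (ξ j))
    (hprune :
      (∀ j ω, ξ j ω = 1) ∨
      ((∃ ξ₀ : Ω → ℝ, (∀ j, ξ j = ξ₀) ∧
          Measure.map ξ₀ μ = volume.restrict (Set.Icc (0 : ℝ) 1)) ∧
        IndepFun (fun ω (j : Fin m) => ξ j ω)
          (fun ω => (fun i => Zprep i ω, fun i => Zcal i ω,
            fun j => Xt j ω, fun j => Yt j ω)) μ) ∨
      ((Measure.map (fun ω (j : Fin m) => ξ j ω) μ
          = Measure.pi (fun _ : Fin m => volume.restrict (Set.Icc (0 : ℝ) 1))) ∧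
        IndepFun (fun ω (j : Fin m) => ξ j ω)
          (fun ω => (fun i => Zprep i ω, fun i => Zcal i ω,
            fun j => Xt j ω, fun j => Yt j ω)) μ)) :
    -- the OptCS-MSel functionals satisfy the three defining properties
    (∀ j : Fin m, MonotoneNull cfun (mselV n₁ n₂ m K hK q Vsc) j) ∧
    PermEquivariant (mselV n₁ n₂ m K hK q Vsc) ∧
    (∀ j : Fin m, PermInvariantNull cfun (mselR n₁ n₂ m K hK q Vsc) j) ∧
    -- consequently, under exchangeability, FDR ≤ q
    ((∀ j : Fin m, ∀ π : Equiv.Perm ((Fin n₁ ⊕ Fin n₂) ⊕ Unit),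
        Measure.map (fun ω =>
            ((fun i : (Fin n₁ ⊕ Fin n₂) ⊕ Unit =>
                Sum.elim (Sum.elim (fun i' => Zprep i' ω) (fun i' => Zcal i' ω))
                  (fun _ => (Xt j ω, Yt j ω)) (π i)),
              fun l : {l : Fin m // l ≠ j} => (Xt l.1 ω, cfun (Xt l.1 ω)))) μ
          = Measure.map (fun ω =>
            ((fun i : (Fin n₁ ⊕ Fin n₂) ⊕ Unit =>
                Sum.elim (Sum.elim (fun i' => Zprep i' ω) (fun i' => Zcal i' ω))
                  (fun _ => (Xt j ω, Yt j ω)) i),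
              fun l : {l : Fin m // l ≠ j} => (Xt l.1 ω, cfun (Xt l.1 ω)))) μ) →
      ∫ ω,
          (Set.ncard
              (prunedSet m q
                  (pvals (mselV n₁ n₂ m K hK q Vsc) (fun i => Zprep i ω)
                    (fun i => Zcal i ω) (fun l => (Xt l ω, cfun (Xt l ω))))
                  (fun j => mselR n₁ n₂ m K hK q Vsc (fun i => Zprep i ω)
                    (fun i => Zcal i ω) (fun l => (Xt l ω, cfun (Xt l ω))) j)
                  (fun j => ξ j ω) ∩
                {j : Fin m | Yt j ω ≤ cfun (Xt j ω)}) : ℝ) /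
            ((max 1 (Set.ncard
              (prunedSet m q
                  (pvals (mselV n₁ n₂ m K hK q Vsc) (fun i => Zprep i ω)
                    (fun i => Zcal i ω) (fun l => (Xt l ω, cfun (Xt l ω))))
                  (fun j => mselR n₁ n₂ m K hK q Vsc (fun i => Zprep i ω)
                    (fun i => Zcal i ω) (fun l => (Xt l ω, cfun (Xt l ω))) j)
                  (fun j => ξ j ω))) : ℕ) : ℝ) ∂μ
        ≤ q) :=
  optcs_msel_valid_general μ n₁ n₂ m K hK q hq cfun hcfun Vsc hVscMeas hVscClip Zprep Zcal Xt Yt ξ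
    hZprep hZcal hXt hYt hξmeas hprune

end OptCS
end

section
/- Let p_1, …, p_m in [0,1], nonnegative reals R̂_1, …, R̂_m, and q in (0,1). If λ, η in [0,1]^m satisfy λ_j ≤ η_j for all j in [m], then r*(η) ≤ r*(λ) and S(η) ⊆ S(λ). In particular, the deterministic pruning set S(1, …, 1) is contained in both the heterogeneous pruning set S(ξ_1, …, ξ_m) for any ξ_1, …, ξ_m in [0,1] and the homogeneous pruning set S(ξ, …, ξ) for any ξ in [0,1]. -/
/-! Raising the pruning weights `λ_j R̂_j` shrinks every candidate set
`{j : p_j ≤ s_j ∧ λ_j R̂_j ≤ r}`, hence weakens the predicate whose largest witness is `r*`;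
so `r*` drops, and each selection condition `λ_j R̂_j ≤ r*` gets harder on both sides. -/

section Antitone

variable {m : ℕ} {q : ℝ} {p R lam eta : Fin m → ℝ}

theorem prunedThreshold_antitone (h : ∀ j, lam j * R j ≤ eta j * R j) :
    prunedThreshold m q p R eta ≤ prunedThreshold m q p R lam := by
  refine Nat.findGreatest_mono (fun r hr => hr.trans ?_) le_rfl
  exact Set.ncard_le_ncard (fun j hj => ⟨hj.1, (h j).trans hj.2⟩) (Set.toFinite _)

theorem prunedSet_antitone (h : ∀ j, lam j * R j ≤ eta j * R j) :
    prunedSet m q p R eta ⊆ prunedSet m q p R lam := fun j hj =>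
  ⟨hj.1, (h j).trans (hj.2.trans (by exact_mod_cast prunedThreshold_antitone h))⟩

end Antitone

theorem optcs_pruned_antitone_general
    (m : ℕ) (q : ℝ)
    (p : Fin m → ℝ)
    (R : Fin m → ℝ) (hR : ∀ j, 0 ≤ R j) :
    (∀ lam eta : Fin m → ℝ, (∀ j, lam j ∈ Set.Icc (0 : ℝ) 1) →
        (∀ j, eta j ∈ Set.Icc (0 : ℝ) 1) → (∀ j, lam j ≤ eta j) →
        prunedThreshold m q p R eta ≤ prunedThreshold m q p R lam ∧
          prunedSet m q p R eta ⊆ prunedSet m q p R lam) ∧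
    (∀ xi : Fin m → ℝ, (∀ j, xi j ∈ Set.Icc (0 : ℝ) 1) →
        prunedSet m q p R (fun _ => 1) ⊆ prunedSet m q p R xi) ∧
    (∀ xi : ℝ, xi ∈ Set.Icc (0 : ℝ) 1 →
        prunedSet m q p R (fun _ => 1) ⊆ prunedSet m q p R (fun _ => xi)) := by
  have weight_le {lam eta : Fin m → ℝ} (hle : ∀ j, lam j ≤ eta j) (j : Fin m) :
      lam j * R j ≤ eta j * R j :=
    mul_le_mul_of_nonneg_right (hle j) (hR j)
  refine ⟨fun lam eta _ _ hle =>
      ⟨prunedThreshold_antitone (weight_le hle), prunedSet_antitone (weight_le hle)⟩, ?_, ?_⟩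
  · exact fun xi hxi => prunedSet_antitone (weight_le fun j => (hxi j).2)
  · exact fun xi hxi => prunedSet_antitone (weight_le fun _ => hxi.2)

/-- If λ ≤ η coordinatewise (both in [0,1]^m), then r*(η) ≤ r*(λ) and
S(η) ⊆ S(λ).  In particular, the deterministic pruning set S(1,…,1) is contained in the
heterogeneous pruning set S(ξ₁,…,ξ_m) for any ξ₁,…,ξ_m ∈ [0,1] and in the homogeneous pruning
set S(ξ,…,ξ) for any ξ ∈ [0,1]. -/
theorem optcs_pruned_antitone
    (m : ℕ) (q : ℝ) (hq : q ∈ Set.Ioo (0 : ℝ) 1)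
    (p : Fin m → ℝ) (hp : ∀ j, p j ∈ Set.Icc (0 : ℝ) 1)
    (R : Fin m → ℝ) (hR : ∀ j, 0 ≤ R j) :
    (∀ lam eta : Fin m → ℝ, (∀ j, lam j ∈ Set.Icc (0 : ℝ) 1) →
        (∀ j, eta j ∈ Set.Icc (0 : ℝ) 1) → (∀ j, lam j ≤ eta j) →
        prunedThreshold m q p R eta ≤ prunedThreshold m q p R lam ∧
          prunedSet m q p R eta ⊆ prunedSet m q p R lam) ∧
    (∀ xi : Fin m → ℝ, (∀ j, xi j ∈ Set.Icc (0 : ℝ) 1) →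
        prunedSet m q p R (fun _ => 1) ⊆ prunedSet m q p R xi) ∧
    (∀ xi : ℝ, xi ∈ Set.Icc (0 : ℝ) 1 →
        prunedSet m q p R (fun _ => 1) ⊆ prunedSet m q p R (fun _ => xi)) :=
  optcs_pruned_antitone_general m q p R hR
end

section
/- Let p_1, …, p_m in [0,1], nonnegative reals R̂_1, …, R̂_m, and q in (0,1). Then the deterministically pruned selection set is contained in the BH selection set: S(1, …, 1) ⊆ S_BH. -/
/-!
With `λ ≡ 1`, a pruned selection `j` has `p_j ≤ q·R̂_j/m` and `R̂_j ≤ r*`, hence `p_j ≤ q·r*/m`.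
So at least `r*` p-values lie below the BH line at `r*`, which makes `r*` a candidate in the
maximum defining `r*_BH`; thus `r* ≤ r*_BH`, and `p_j ≤ q·r*/m ≤ q·r*_BH/m`.
-/

section

variable {m : ℕ} {q : ℝ} {p : Fin m → ℝ}

theorem prunedThreshold_le (R lam : Fin m → ℝ) : prunedThreshold m q p R lam ≤ m :=
  Nat.findGreatest_le m

theorem prunedThreshold_le_ncard (R lam : Fin m → ℝ) :
    prunedThreshold m q p R lam ≤
      {j | p j ≤ q * R j / m ∧ lam j * R j ≤ (prunedThreshold m q p R lam : ℝ)}.ncard :=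
  Nat.findGreatest_spec (P := fun r => r ≤ {j | p j ≤ q * R j / m ∧ lam j * R j ≤ (r : ℝ)}.ncard)
    (Nat.zero_le m) (Nat.zero_le _)

theorem le_bhThreshold {r : ℕ} (hrm : r ≤ m) (hr : r ≤ {j | p j ≤ q * (r : ℝ) / m}.ncard) :
    r ≤ bhThreshold m q p :=
  Nat.le_findGreatest hrm hr

theorem le_mul_div_of_le_of_le {a x y : ℝ} (hq : 0 ≤ q) (ha : a ≤ q * x / m) (hxy : x ≤ y) :
    a ≤ q * y / m :=
  ha.trans (by gcongr)

theorem setOf_le_mul_div_subset_bhSet {r : ℕ} (hq : 0 ≤ q) (hr : r ≤ bhThreshold m q p) :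
    {j | p j ≤ q * (r : ℝ) / m} ⊆ bhSet m q p :=
  fun _ hj => le_mul_div_of_le_of_le hq hj (by exact_mod_cast hr)

theorem prunedSet_one_subset_setOf_le (hq : 0 ≤ q) (R : Fin m → ℝ) :
    prunedSet m q p R (fun _ => 1) ⊆
      {j | p j ≤ q * (prunedThreshold m q p R (fun _ => 1) : ℝ) / m} :=
  fun _ ⟨hpj, hRj⟩ => le_mul_div_of_le_of_le hq hpj (by simpa only [one_mul] using hRj)

theorem prunedThreshold_one_le_bhThreshold (hq : 0 ≤ q) (R : Fin m → ℝ) :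
    prunedThreshold m q p R (fun _ => 1) ≤ bhThreshold m q p :=
  le_bhThreshold (prunedThreshold_le R _) <|
    (prunedThreshold_le_ncard R _).trans <|
      Set.ncard_le_ncard (prunedSet_one_subset_setOf_le hq R) (Set.toFinite _)

end

theorem optcs_pruned_subset_bh_general
    (m : ℕ) (q : ℝ) (hq : q ∈ Set.Ioo (0 : ℝ) 1)
    (p : Fin m → ℝ)
    (R : Fin m → ℝ) :
    prunedSet m q p R (fun _ => 1) ⊆ bhSet m q p :=
  (prunedSet_one_subset_setOf_le hq.1.le R).trans
    (setOf_le_mul_div_subset_bhSet hq.1.le (prunedThreshold_one_le_bhThreshold hq.1.le R))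

/-- The deterministically pruned selection set is contained in the BH selection
set: S(1,…,1) ⊆ S_BH. -/
theorem optcs_pruned_subset_bh
    (m : ℕ) (q : ℝ) (hq : q ∈ Set.Ioo (0 : ℝ) 1)
    (p : Fin m → ℝ) (hp : ∀ j, p j ∈ Set.Icc (0 : ℝ) 1)
    (R : Fin m → ℝ) (hR : ∀ j, 0 ≤ R j) :
    prunedSet m q p R (fun _ => 1) ⊆ bhSet m q p :=
  optcs_pruned_subset_bh_general m q hq p R
end

section
/- Let p_1, …, p_m in [0,1], nonnegative reals R̂_1, …, R̂_m, λ in [0,1]^m, and q in (0,1). Then the size of the pruned selection set equals its threshold: |S(λ)| = r*(λ). -/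
/-! The threshold `r*` is the largest `r ≤ m` with `r ≤ f r`, where `f r` counts the candidates
surviving pruning at level `r`. Since `f` is monotone and bounded by `m`, `r* ≤ f r*` gives
`f r* ≤ f (f r*)`, so `f r*` is itself admissible and hence `f r* ≤ r*`. As `|S(λ)| = f r*`,
this is the claim. -/

theorem Monotone.apply_findGreatest_le_apply_eq {f : ℕ → ℕ} (hf : Monotone f) {m : ℕ}
    (hfm : ∀ r, f r ≤ m) :
    f (Nat.findGreatest (fun r => r ≤ f r) m) = Nat.findGreatest (fun r => r ≤ f r) m := by
  set r := Nat.findGreatest (fun r => r ≤ f r) m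
  have hr : r ≤ f r := Nat.findGreatest_spec (P := fun r => r ≤ f r) m.zero_le (f 0).zero_le
  exact le_antisymm (Nat.le_findGreatest (hfm r) (hf hr)) hr

theorem pruned_card_eq_threshold_general
    (m : ℕ) (q : ℝ)
    (p : Fin m → ℝ)
    (R : Fin m → ℝ)
    (lam : Fin m → ℝ) :
    Set.ncard (prunedSet m q p R lam) = prunedThreshold m q p R lam := by
  set survivors : ℕ → ℕ := fun r =>
    Set.ncard {j : Fin m | p j ≤ q * R j / m ∧ lam j * R j ≤ (r : ℝ)}
  have h_mono : Monotone survivors := fun r s hrs =>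
    Set.ncard_le_ncard fun j hj => ⟨hj.1, hj.2.trans (by exact_mod_cast hrs)⟩
  have h_le : ∀ r, survivors r ≤ m := fun r =>
    (Set.ncard_le_card _).trans_eq (Nat.card_fin m)
  exact h_mono.apply_findGreatest_le_apply_eq h_le

/-- The size of the pruned selection set equals its threshold:
`|S(λ)| = r*(λ)`. -/
theorem pruned_card_eq_threshold
    (m : ℕ) (q : ℝ) (hq : q ∈ Set.Ioo (0 : ℝ) 1)
    (p : Fin m → ℝ) (hp : ∀ j, p j ∈ Set.Icc (0 : ℝ) 1)
    (R : Fin m → ℝ) (hR : ∀ j, 0 ≤ R j)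
    (lam : Fin m → ℝ) (hlam : ∀ j, lam j ∈ Set.Icc (0 : ℝ) 1) :
    Set.ncard (prunedSet m q p R lam) = prunedThreshold m q p R lam :=
  pruned_card_eq_threshold_general m q p R lam
end

section
/- Let p_1, …, p_m in [0,1], nonnegative reals R̂_1, …, R̂_m, λ in [0,1]^m, and q in (0,1). Fix j in [m] with j in S(λ), and let λ' agree with λ in every coordinate except λ'_j = 0. Then r*(λ') = r*(λ) and S(λ') = S(λ); that is, once j is selected, sending its pruning value to 0 does not change the pruned selection set. -/
/-- The sets counted in `prunedThreshold`; `prunedSet` is the one at level `prunedThreshold`. -/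
def prunedCandidates (m : ℕ) (q : ℝ) (p R lam : Fin m → ℝ) (r : ℝ) : Set (Fin m) :=
  {i : Fin m | p i ≤ q * R i / m ∧ lam i * R i ≤ r}

lemma Nat.findGreatest_le_of_imp {P Q : ℕ → Prop} [DecidablePred P] [DecidablePred Q] {n : ℕ}
    (hQP : ∀ r, Nat.findGreatest P n < r → Q r → P r) :
    Nat.findGreatest Q n ≤ Nat.findGreatest P n := by
  by_contra! hlt
  have hQ : Q (Nat.findGreatest Q n) :=
    Nat.findGreatest_of_ne_zero rfl (Nat.ne_zero_of_lt hlt)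
  exact Nat.findGreatest_is_greatest hlt (Nat.findGreatest_le n) (hQP _ hlt hQ)

lemma Nat.findGreatest_eq_of_imp {P Q : ℕ → Prop} [DecidablePred P] [DecidablePred Q] {n : ℕ}
    (hPQ : ∀ r, P r → Q r) (hQP : ∀ r, Nat.findGreatest P n < r → Q r → P r) :
    Nat.findGreatest Q n = Nat.findGreatest P n :=
  le_antisymm (Nat.findGreatest_le_of_imp hQP) (Nat.findGreatest_mono_left hPQ n)

section UpdateZero

variable {ι : Type*} [DecidableEq ι] (lam R : ι → ℝ) {j i : ι} {r : ℝ}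

lemma update_zero_mul_le (hr : 0 ≤ r) (h : lam i * R i ≤ r) :
    Function.update lam j 0 i * R i ≤ r := by
  rcases eq_or_ne i j with rfl | hij
  · simpa using hr
  · simpa [Function.update_of_ne hij] using h

lemma update_zero_mul_le_iff (hr : 0 ≤ r) (hj : lam j * R j ≤ r) :
    Function.update lam j 0 i * R i ≤ r ↔ lam i * R i ≤ r := by
  rcases eq_or_ne i j with rfl | hij
  · simpa using ⟨fun _ => hj, fun _ => hr⟩
  · rw [Function.update_of_ne hij]

end UpdateZero

section Candidates

variable {m : ℕ} {q : ℝ} {p R lam : Fin m → ℝ} {r : ℝ}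

lemma prunedCandidates_subset_update_zero (j : Fin m) (hr : 0 ≤ r) :
    prunedCandidates m q p R lam r ⊆ prunedCandidates m q p R (Function.update lam j 0) r :=
  fun _ hi => ⟨hi.1, update_zero_mul_le lam R hr hi.2⟩

lemma prunedCandidates_update_zero {j : Fin m} (hr : 0 ≤ r) (hj : lam j * R j ≤ r) :
    prunedCandidates m q p R (Function.update lam j 0) r = prunedCandidates m q p R lam r := by
  ext i
  exact and_congr_right fun _ => update_zero_mul_le_iff lam R hr hj

end Candidates

theorem pruned_stable_under_zeroing_selected_general
    (m : ℕ) (q : ℝ)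
    (p : Fin m → ℝ)
    (R : Fin m → ℝ)
    (lam : Fin m → ℝ)
    (j : Fin m) (hj : j ∈ prunedSet m q p R lam) :
    prunedThreshold m q p R (Function.update lam j 0) = prunedThreshold m q p R lam ∧
      prunedSet m q p R (Function.update lam j 0) = prunedSet m q p R lam := by
  have hjr : ∀ r : ℕ, prunedThreshold m q p R lam ≤ r → lam j * R j ≤ r :=
    fun r hr => hj.2.trans (Nat.cast_le.mpr hr)
  have hthr : prunedThreshold m q p R (Function.update lam j 0) = prunedThreshold m q p R lam :=
    Nat.findGreatest_eq_of_imp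
      (fun r hr => hr.trans (Set.ncard_le_ncard
        (prunedCandidates_subset_update_zero j (Nat.cast_nonneg r))))
      (fun r hlt hr => hr.trans_eq <| congrArg Set.ncard <|
        prunedCandidates_update_zero (Nat.cast_nonneg r) (hjr r hlt.le))
  refine ⟨hthr, ?_⟩
  change prunedCandidates m q p R _ _ = prunedCandidates m q p R lam _
  rw [hthr]
  exact prunedCandidates_update_zero (Nat.cast_nonneg _) (hjr _ le_rfl)

/-- If j is selected by the pruned procedure, then sending its pruning value
to 0 changes neither the pruning threshold nor the pruned selection set:
r*(λ') = r*(λ) and S(λ') = S(λ), where λ' = λ except λ'_j = 0. -/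
theorem pruned_stable_under_zeroing_selected
    (m : ℕ) (q : ℝ) (hq : q ∈ Set.Ioo (0 : ℝ) 1)
    (p : Fin m → ℝ) (hp : ∀ j, p j ∈ Set.Icc (0 : ℝ) 1)
    (R : Fin m → ℝ) (hR : ∀ j, 0 ≤ R j)
    (lam : Fin m → ℝ) (hlam : ∀ j, lam j ∈ Set.Icc (0 : ℝ) 1)
    (j : Fin m) (hj : j ∈ prunedSet m q p R lam) :
    prunedThreshold m q p R (Function.update lam j 0) = prunedThreshold m q p R lam ∧
      prunedSet m q p R (Function.update lam j 0) = prunedSet m q p R lam :=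
  pruned_stable_under_zeroing_selected_general m q p R lam j hj
end

section
/- Let W_1, …, W_{N+1} be exchangeable real-valued random variables and define the conformal p-value p = (1 + Σ_{i=1}^{N} 1{W_i ≤ W_{N+1}})/(N+1). Then for every measurable function t : ℝ^{N+1} → [0,1] that is invariant under permutations of its arguments, P(p ≤ t(W_1, …, W_{N+1})) ≤ E[t(W_1, …, W_{N+1})]. In particular, P(p ≤ t) ≤ t for every constant t in [0,1]. -/
/-!
The p-value is `rank W (last) / (N + 1)`, where `rank v k` counts the coordinates of `v` that are
at most `v k`. By exchangeability, and the permutation invariance of `t`, the event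
`rank W k ≤ (N + 1) t(W)` has the same probability for every index `k`. Summing over `k`,
`(N + 1) P(p ≤ t(W))` is the expected number of indices `k` with `rank W k ≤ (N + 1) t(W)`, and
pointwise there are at most `(N + 1) t(W)` of them: if `k` is the largest such index, all of them
are counted by `rank W k`.
-/

open MeasureTheory ENNReal Finset

namespace Conformal

section Rank

variable {ι α : Type*} [Fintype ι] [LinearOrder α]

def rank (v : ι → α) (k : ι) : ℕ :=
  #{j | v j ≤ v k}

theorem rank_comp_perm (v : ι → α) (π : Equiv.Perm ι) (k : ι) :
    rank (v ∘ π) k = rank v (π k) :=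
  card_equiv π (by simp)

theorem card_rank_le_le (v : ι → α) {s : ℝ} (hs : 0 ≤ s) :
    (#{k | (rank v k : ℝ) ≤ s} : ℝ) ≤ s := by
  set S : Finset ι := {k | (rank v k : ℝ) ≤ s}
  rcases S.eq_empty_or_nonempty with hS | hS
  · simpa [hS] using hs
  obtain ⟨k, hkS, hk_max⟩ := S.exists_max_image v hS
  have hS_sub : S ⊆ ({j | v j ≤ v k} : Finset ι) := fun j hj => by simpa using hk_max j hj
  calc (#S : ℝ) ≤ rank v k := by exact_mod_cast card_le_card hS_sub
    _ ≤ s := (mem_filter.mp hkS).2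

theorem rank_last {N : ℕ} (v : Fin (N + 1) → α) :
    rank v (Fin.last N) = {i : Fin N | v i.castSucc ≤ v (Fin.last N)}.ncard + 1 := by
  rw [rank, card_filter, Fin.sum_univ_castSucc, if_pos le_rfl, ← card_filter,
    ← Set.ncard_coe_finset, coe_filter]
  simp

end Rank

section Exchangeable

variable {Ω ι α : Type*} [MeasurableSpace Ω] {μ : Measure Ω} [MeasurableSpace α] {W : Ω → ι → α}

theorem measure_preimage_comp_perm (hW : Measurable W)
    (hexch : ∀ π : Equiv.Perm ι, μ.map (fun ω => W ω ∘ π) = μ.map W)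
    (π : Equiv.Perm ι) {S : Set (ι → α)} (hS : MeasurableSet S) :
    μ ((fun ω => W ω ∘ π) ⁻¹' S) = μ (W ⁻¹' S) := by
  have hWπ : Measurable fun ω => W ω ∘ π := by fun_prop
  rw [← Measure.map_apply hWπ hS, hexch, Measure.map_apply hW hS]

variable [Fintype ι] [LinearOrder α] [TopologicalSpace α] [OpensMeasurableSpace α]
  [OrderClosedTopology α] [SecondCountableTopology α]

theorem measurable_rank (k : ι) : Measurable fun v : ι → α => rank v k := by
  simp_rw [rank, card_filter]
  exact Finset.measurable_sum _ fun j _ =>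
    Measurable.ite (measurableSet_le (measurable_pi_apply j) (measurable_pi_apply k))
      measurable_const measurable_const

theorem measure_rank_le_eq (hW : Measurable W)
    (hexch : ∀ π : Equiv.Perm ι, μ.map (fun ω => W ω ∘ π) = μ.map W)
    {t : (ι → α) → ℝ} (ht : Measurable t) (ht_perm : ∀ (π : Equiv.Perm ι) v, t (v ∘ π) = t v)
    (c : ℝ) (j k : ι) :
    μ {ω | (rank (W ω) j : ℝ) ≤ c * t (W ω)} = μ {ω | (rank (W ω) k : ℝ) ≤ c * t (W ω)} := by
  classical
  have hA : MeasurableSet {v : ι → α | (rank v k : ℝ) ≤ c * t v} :=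
    measurableSet_le (measurable_from_nat.comp (measurable_rank k)) (measurable_const.mul ht)
  convert measure_preimage_comp_perm hW hexch (Equiv.swap j k) hA using 2
  · ext ω
    simp [rank_comp_perm, ht_perm]
  · rfl

theorem measure_rank_le_le_lintegral (hW : Measurable W)
    (hexch : ∀ π : Equiv.Perm ι, μ.map (fun ω => W ω ∘ π) = μ.map W)
    {t : (ι → α) → ℝ} (ht : Measurable t) (ht_nonneg : ∀ v, 0 ≤ t v)
    (ht_perm : ∀ (π : Equiv.Perm ι) v, t (v ∘ π) = t v) (k : ι) :
    μ {ω | (rank (W ω) k : ℝ) ≤ Fintype.card ι * t (W ω)} ≤ ∫⁻ ω, .ofReal (t (W ω)) ∂μ := by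
  set n : ℝ := (Fintype.card ι : ℝ)
  set E : ι → Set Ω := fun j => {ω | (rank (W ω) j : ℝ) ≤ n * t (W ω)}
  have hE : ∀ j, MeasurableSet (E j) := fun j =>
    measurableSet_le (measurable_from_nat.comp ((measurable_rank j).comp hW))
      (measurable_const.mul (ht.comp hW))
  have h_count : ∀ ω, ∑ j, (E j).indicator 1 ω ≤ ENNReal.ofReal (n * t (W ω)) := fun ω => by
    simp only [Set.indicator_apply, Pi.one_apply, sum_boole, E, Set.mem_ofPred_eq]
    rw [← ofReal_natCast]
    exact ofReal_le_ofReal <|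
      card_rank_le_le (W ω) (mul_nonneg (Nat.cast_nonneg _ : (0 : ℝ) ≤ n) (ht_nonneg _))
  have h_card : (Fintype.card ι : ℝ≥0∞) * μ (E k) ≤ Fintype.card ι * ∫⁻ ω, .ofReal (t (W ω)) ∂μ :=
    calc (Fintype.card ι : ℝ≥0∞) * μ (E k) = ∑ j, μ (E j) := by
          simp [E, measure_rank_le_eq hW hexch ht ht_perm n _ k]
      _ = ∫⁻ ω, ∑ j, (E j).indicator 1 ω ∂μ := by
          rw [lintegral_finsetSum _ fun j _ => measurable_one.indicator (hE j)]
          simp only [lintegral_indicator_one (hE _)]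
      _ ≤ ∫⁻ ω, .ofReal (n * t (W ω)) ∂μ := lintegral_mono h_count
      _ = Fintype.card ι * ∫⁻ ω, .ofReal (t (W ω)) ∂μ := by
          rw [← lintegral_const_mul _ (by fun_prop)]
          congr with ω
          rw [ENNReal.ofReal_mul (Nat.cast_nonneg _), ofReal_natCast]
  have : Nonempty ι := ⟨k⟩
  exact (ENNReal.mul_le_mul_iff_right (by simp) (natCast_ne_top _)).mp h_card

theorem measure_rank_le_le_integral [IsFiniteMeasure μ] (hW : Measurable W)
    (hexch : ∀ π : Equiv.Perm ι, μ.map (fun ω => W ω ∘ π) = μ.map W)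
    {t : (ι → α) → ℝ} (ht : Measurable t) (ht_Icc : ∀ v, t v ∈ Set.Icc (0 : ℝ) 1)
    (ht_perm : ∀ (π : Equiv.Perm ι) v, t (v ∘ π) = t v) (k : ι) :
    μ {ω | (rank (W ω) k : ℝ) ≤ Fintype.card ι * t (W ω)} ≤ .ofReal (∫ ω, t (W ω) ∂μ) := by
  have h_integrable : Integrable (fun ω => t (W ω)) μ :=
    .of_mem_Icc 0 1 (ht.comp hW).aemeasurable (.of_forall fun ω => ht_Icc _)
  rw [ofReal_integral_eq_lintegral_ofReal h_integrable (.of_forall fun ω => (ht_Icc _).1)]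
  exact measure_rank_le_le_lintegral hW hexch ht (fun v => (ht_Icc v).1) ht_perm k

end Exchangeable

end Conformal

open Conformal in
/-- If W₁, …, W_{N+1} are exchangeable and
p = (1 + Σ_{i=1}^N 1{W_i ≤ W_{N+1}})/(N+1), then for every measurable permutation-invariant
t : ℝ^{N+1} → [0,1] we have P(p ≤ t(W)) ≤ E[t(W)]; in particular P(p ≤ t) ≤ t for constant
t ∈ [0,1]. -/
theorem conformal_pvalue_superuniform
    {Ω : Type*} [MeasurableSpace Ω] (μ : Measure Ω) [IsProbabilityMeasure μ]
    (N : ℕ) (W : Ω → Fin (N + 1) → ℝ) (hW : Measurable W)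
    (hexch : ∀ π : Equiv.Perm (Fin (N + 1)),
      Measure.map (fun ω => W ω ∘ π) μ = Measure.map W μ)
    (p : Ω → ℝ)
    (hp : ∀ ω, p ω =
      (1 + (Set.ncard {i : Fin N | W ω i.castSucc ≤ W ω (Fin.last N)} : ℝ)) / (N + 1)) :
    (∀ t : (Fin (N + 1) → ℝ) → ℝ, Measurable t → (∀ v, t v ∈ Set.Icc (0 : ℝ) 1) →
        (∀ (π : Equiv.Perm (Fin (N + 1))) v, t (v ∘ π) = t v) →
        μ {ω | p ω ≤ t (W ω)} ≤ ENNReal.ofReal (∫ ω, t (W ω) ∂μ)) ∧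
      (∀ t : ℝ, t ∈ Set.Icc (0 : ℝ) 1 → μ {ω | p ω ≤ t} ≤ ENNReal.ofReal t) := by
  have hp_le : ∀ ω s, p ω ≤ s ↔
      (rank (W ω) (Fin.last N) : ℝ) ≤ Fintype.card (Fin (N + 1)) * s := fun ω s => by
    simp [hp, rank_last, div_le_iff₀ (N.cast_add_one_pos (α := ℝ)), add_comm, mul_comm]
  refine ⟨fun t ht ht_Icc ht_perm => ?_, fun t ht => ?_⟩
  · simp_rw [hp_le]
    exact measure_rank_le_le_integral hW hexch ht ht_Icc ht_perm _
  · simpa [hp_le] using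
      measure_rank_le_le_integral hW hexch measurable_const (fun _ => ht) (fun _ _ => rfl) _
end

section
/- Let W_1, …, W_{N+1} be exchangeable real-valued random variables that are almost surely pairwise distinct, and define the conformal p-value p = (1 + Σ_{i=1}^{N} 1{W_i ≤ W_{N+1}})/(N+1). Then p is uniformly distributed on the set {1/(N+1), 2/(N+1), …, N/(N+1), 1}. -/
/-!
The conformal p-value is `rank W (Fin.last N) / (N + 1)`, where `rank v j = #{i | v i ≤ v j}`.
Without ties the ranks of the `N + 1` coordinates are a permutation of `1, …, N + 1`, so for each
`k` almost surely exactly one coordinate has rank `k`. Exchangeability (swapping that coordinate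
with the last one) makes these `N + 1` events equiprobable, so each has probability `1 / (N + 1)`.
-/

open MeasureTheory Finset

namespace ConformalPrediction

def rank {ι α : Type*} [Fintype ι] [LinearOrder α] (v : ι → α) (j : ι) : ℕ :=
  #{i | v i ≤ v j}

section Rank

variable {ι α : Type*} [Fintype ι] [LinearOrder α]

lemma rank_comp_perm (v : ι → α) (π : Equiv.Perm ι) (j : ι) :
    rank (v ∘ π) j = rank v (π j) :=
  card_equiv π (by simp)

lemma one_le_rank (v : ι → α) (j : ι) : 1 ≤ rank v j :=
  card_pos.mpr ⟨j, by simp⟩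

lemma rank_le_card (v : ι → α) (j : ι) : rank v j ≤ Fintype.card ι :=
  card_le_univ _

lemma rank_lt_rank {v : ι → α} {j j' : ι} (h : v j < v j') : rank v j < rank v j' := by
  refine card_lt_card ⟨fun i hi => ?_, fun hsub => ?_⟩
  · simp only [mem_filter, mem_univ, true_and] at hi ⊢
    exact hi.trans h.le
  · have := hsub (by simp : j' ∈ ({i | v i ≤ v j'} : Finset ι))
    simp only [mem_filter, mem_univ, true_and] at this
    exact this.not_gt h

lemma rank_injective {v : ι → α} (hv : Function.Injective v) : Function.Injective (rank v) := by
  intro j j' h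
  rcases lt_trichotomy (v j) (v j') with hlt | heq | hgt
  · exact absurd h (rank_lt_rank hlt).ne
  · exact hv heq
  · exact absurd h (rank_lt_rank hgt).ne'

lemma existsUnique_rank_eq {v : ι → α} (hv : Function.Injective v) {k : ℕ} (hk₁ : 1 ≤ k)
    (hk₂ : k ≤ Fintype.card ι) : ∃! j, rank v j = k := by
  let r : ι → Icc 1 (Fintype.card ι) := fun j =>
    ⟨rank v j, mem_Icc.mpr ⟨one_le_rank v j, rank_le_card v j⟩⟩
  have hr : Function.Bijective r := by
    rw [Fintype.bijective_iff_injective_and_card]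
    exact ⟨fun j j' h => rank_injective hv (congrArg Subtype.val h), by simp⟩
  obtain ⟨j, hj, hunique⟩ := hr.existsUnique ⟨k, mem_Icc.mpr ⟨hk₁, hk₂⟩⟩
  exact ⟨j, congrArg Subtype.val hj, fun j' hj' => hunique j' (Subtype.ext hj')⟩

lemma rank_last_eq {N : ℕ} (v : Fin (N + 1) → α) :
    rank v (Fin.last N) = 1 + Set.ncard {i : Fin N | v i.castSucc ≤ v (Fin.last N)} := by
  rw [← coe_filter_univ, Set.ncard_coe_finset, rank, Fin.univ_castSuccEmb, filter_cons,
    if_pos le_rfl, card_cons, filter_map, card_map, Nat.add_comm]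
  rfl

variable [TopologicalSpace α] [OrderClosedTopology α] [SecondCountableTopology α]
  [MeasurableSpace α] [OpensMeasurableSpace α]

lemma measurable_rank (j : ι) : Measurable fun v : ι → α => rank v j := by
  simp only [rank, card_filter]
  exact Finset.measurable_sum _ fun i _ =>
    Measurable.ite (measurableSet_le (measurable_pi_apply i) (measurable_pi_apply j))
      measurable_const measurable_const

end Rank

section Measure

variable {Ω : Type*} [MeasurableSpace Ω] {μ : Measure Ω}

lemma measure_eq_inv_card_of_ae_existsUnique [IsProbabilityMeasure μ] {ι : Type*} [Fintype ι]
    {A : ι → Set Ω} (hA : ∀ i, NullMeasurableSet (A i) μ) (hunique : ∀ᵐ ω ∂μ, ∃! i, ω ∈ A i)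
    (heq : ∀ i j, μ (A i) = μ (A j)) (i : ι) : μ (A i) = (Fintype.card ι : ENNReal)⁻¹ := by
  have hdisj : Pairwise (Function.onFun (AEDisjoint μ) A) := fun j j' hne =>
    measure_mono_null (t := {ω | ¬∃! i, ω ∈ A i})
      (by rintro ω ⟨hj, hj'⟩ ⟨_, _, hl⟩; exact hne ((hl j hj).trans (hl j' hj').symm))
      (ae_iff.mp hunique)
  have hcover : μ (⋃ j, A j) = 1 := by
    rw [← measure_univ (μ := μ), ← ae_mem_iff_measure_eq (NullMeasurableSet.iUnion hA)]
    filter_upwards [hunique] with ω ⟨j, hj, _⟩ using Set.mem_iUnion.mpr ⟨j, hj⟩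
  have hsum : ∑ j, μ (A j) = 1 := by
    rw [← hcover, measure_iUnion₀ hdisj hA, tsum_fintype]
  rw [sum_congr rfl fun j _ => heq j i, sum_const, card_univ, nsmul_eq_mul] at hsum
  exact ENNReal.eq_inv_of_mul_eq_one_left (by rw [mul_comm, hsum])

lemma measure_preimage_comp_perm {ι β : Type*} [MeasurableSpace β] {W : Ω → ι → β}
    (hW : Measurable W) {π : Equiv.Perm ι}
    (hexch : Measure.map (fun ω => W ω ∘ π) μ = Measure.map W μ) {S : Set (ι → β)}
    (hS : MeasurableSet S) : μ ((fun ω => W ω ∘ π) ⁻¹' S) = μ (W ⁻¹' S) := by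
  have hWπ : Measurable fun ω => W ω ∘ π :=
    measurable_pi_lambda _ fun i => (measurable_pi_apply (π i)).comp hW
  rw [← Measure.map_apply hWπ hS, ← Measure.map_apply hW hS, hexch]

end Measure

end ConformalPrediction

open ConformalPrediction in
/-- If W₁, …, W_{N+1} are exchangeable and almost surely pairwise distinct,
then the conformal p-value p = (1 + Σ_{i=1}^N 1{W_i ≤ W_{N+1}})/(N+1) is uniformly distributed
on {1/(N+1), 2/(N+1), …, 1}: P(p = k/(N+1)) = 1/(N+1) for every k ∈ {1, …, N+1}. -/
theorem conformal_pvalue_uniform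
    {Ω : Type*} [MeasurableSpace Ω] (μ : Measure Ω) [IsProbabilityMeasure μ]
    (N : ℕ) (W : Ω → Fin (N + 1) → ℝ) (hW : Measurable W)
    (hexch : ∀ π : Equiv.Perm (Fin (N + 1)),
      Measure.map (fun ω => W ω ∘ π) μ = Measure.map W μ)
    (hdistinct : ∀ᵐ ω ∂μ, Function.Injective (W ω))
    (p : Ω → ℝ)
    (hp : ∀ ω, p ω =
      (1 + (Set.ncard {i : Fin N | W ω i.castSucc ≤ W ω (Fin.last N)} : ℝ)) / (N + 1)) :
    ∀ k : ℕ, 1 ≤ k → k ≤ N + 1 →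
      μ {ω | p ω = (k : ℝ) / (N + 1)} = 1 / (N + 1) := by
  intro k hk₁ hk₂
  let A : Fin (N + 1) → Set Ω := fun j => W ⁻¹' {v | rank v j = k}
  have hA (j : Fin (N + 1)) : MeasurableSet {v : Fin (N + 1) → ℝ | rank v j = k} :=
    measurable_rank j (measurableSet_singleton k)
  have hp_event : {ω | p ω = (k : ℝ) / (N + 1)} = A (Fin.last N) := by
    ext ω
    rw [Set.mem_ofPred_eq, hp, div_left_inj' (by positivity)]
    simp only [A, Set.mem_preimage, Set.mem_ofPred_eq, rank_last_eq]
    norm_cast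
  have hequi (i j : Fin (N + 1)) : μ (A i) = μ (A j) := by
    rw [← measure_preimage_comp_perm hW (hexch (Equiv.swap i j)) (hA j)]
    congr 1
    ext ω
    simp [A, rank_comp_perm]
  have hunique : ∀ᵐ ω ∂μ, ∃! j, ω ∈ A j := hdistinct.mono fun ω hω =>
    existsUnique_rank_eq hω hk₁ (by simpa using hk₂)
  rw [hp_event, measure_eq_inv_card_of_ae_existsUnique (fun j => (hW (hA j)).nullMeasurableSet)
    hunique hequi, Fintype.card_fin, one_div, Nat.cast_succ]
end

section
/- Let G be a sub-σ-algebra on a probability space, let p be a [0,1]-valued random variable such that P(p ≤ T | G) ≤ T almost surely for every G-measurable random variable T taking values in [0,1], and let R be a G-measurable random variable taking values in {1, …, m}. Then for every q in (0,1), E[ 1{p ≤ q·R/m} / R ] ≤ q/m. -/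
open MeasureTheory

/-- Let G be a sub-σ-algebra, p a [0,1]-valued random variable with
P(p ≤ T | G) ≤ T a.s. for every G-measurable [0,1]-valued T, and R a G-measurable random
variable with values in {1, …, m}.  Then for every q ∈ (0,1),
E[1{p ≤ q·R/m}/R] ≤ q/m. -/
theorem cond_superuniform_pvalue_bound
    {Ω : Type*} (G : MeasurableSpace Ω) [inst : MeasurableSpace Ω] (μ : Measure Ω) [IsProbabilityMeasure μ]
    (hG : G ≤ inst)
    (m : ℕ) (q : ℝ) (hq : q ∈ Set.Ioo (0 : ℝ) 1)
    (p : Ω → ℝ) (hpmeas : Measurable p) (hp01 : ∀ ω, p ω ∈ Set.Icc (0 : ℝ) 1)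
    (hpcond : ∀ T : Ω → ℝ, Measurable[G] T → (∀ ω, T ω ∈ Set.Icc (0 : ℝ) 1) →
      ∀ᵐ ω ∂μ, (μ[Set.indicator {ω' | p ω' ≤ T ω'} (fun _ => (1 : ℝ))|G]) ω ≤ T ω)
    (R : Ω → ℕ) (hRmeas : Measurable[G] R)
    (hRval : ∀ ω, 1 ≤ R ω ∧ R ω ≤ m) :
    ∫ ω, Set.indicator {ω' | p ω' ≤ q * (R ω' : ℝ) / m} (fun ω' => ((R ω' : ℝ))⁻¹) ω ∂μ
      ≤ q / m := by
  obtain ⟨ω₀⟩ : Nonempty Ω := by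
    by_contra h
    rw [not_nonempty_iff] at h
    have := measure_univ (μ := μ)
    simp [Set.univ_eq_empty_iff.mpr h] at this
  have hm1 : 1 ≤ m := le_trans (hRval ω₀).1 (hRval ω₀).2
  have hm0 : (0:ℝ) < (m:ℝ) := by exact_mod_cast hm1
  set T : Ω → ℝ := fun ω => q * (R ω : ℝ) / m with hT
  have hRpos : ∀ ω, (0:ℝ) < (R ω : ℝ) := fun ω => by exact_mod_cast (hRval ω).1
  have hTmeas : Measurable[G] T :=
    (((measurable_from_top : Measurable fun n : ℕ => ((n:ℝ))).comp hRmeas).const_mul q).div_const _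
  have hT01 : ∀ ω, T ω ∈ Set.Icc (0:ℝ) 1 := by
    intro ω
    constructor
    · exact div_nonneg (mul_nonneg hq.1.le (Nat.cast_nonneg _)) hm0.le
    · rw [div_le_one hm0]
      calc q * (R ω : ℝ) ≤ 1 * (m : ℝ) := by
            apply mul_le_mul hq.2.le (by exact_mod_cast (hRval ω).2) (hRpos ω).le zero_le_one
        _ = m := one_mul _
  set f : Ω → ℝ := Set.indicator {ω' | p ω' ≤ T ω'} (fun _ => (1:ℝ)) with hf
  set g : Ω → ℝ := fun ω => ((R ω : ℝ))⁻¹ with hg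
  have hgmeas : Measurable[G] g := (measurable_from_top : Measurable fun n : ℕ => ((n:ℝ))⁻¹).comp hRmeas
  have hgmeas' : Measurable[inst] g := hgmeas.mono hG le_rfl
  have hsmeas : MeasurableSet[inst] {ω' | p ω' ≤ T ω'} :=
    measurableSet_le hpmeas (hTmeas.mono hG le_rfl)
  have hfmeasG : Measurable[inst] f :=
    (@measurable_const ℝ Ω _ inst 1).indicator hsmeas
  have hfmeas : Measurable[inst] f := hfmeasG
  have hfint : Integrable f μ := by
    refine Integrable.mono' (integrable_const (μ := μ) (1:ℝ)) hfmeas.aestronglyMeasurable ?_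
    refine Filter.Eventually.of_forall fun ω => ?_
    rw [hf]
    by_cases hω : ω ∈ {ω' | p ω' ≤ T ω'} <;> simp [Set.indicator_apply, hω]
  have hgfint : Integrable (g * f) μ := by
    apply Integrable.mono' (integrable_const (μ := μ) (1:ℝ))
      (hgmeas'.mul hfmeas).aestronglyMeasurable
    refine Filter.Eventually.of_forall fun ω => ?_
    simp only [Pi.mul_apply, norm_mul, Real.norm_eq_abs, hg]
    have h1 : |((R ω : ℝ))⁻¹| ≤ 1 := by
      rw [abs_of_nonneg (by positivity)]
      rw [inv_le_one_iff₀]; right; exact_mod_cast (hRval ω).1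
    have h2 : |f ω| ≤ 1 := by
      rw [hf]
      by_cases hω : ω ∈ {ω' | p ω' ≤ T ω'} <;>
        simp [Set.indicator_apply, hω]
    calc |((R ω : ℝ))⁻¹| * |f ω| ≤ 1 * 1 := mul_le_mul h1 h2 (abs_nonneg _) zero_le_one
      _ = 1 := one_mul _
  haveI : SigmaFinite (μ.trim hG) := by
    infer_instance
  have key : μ[g * f|G] =ᵐ[μ] g * μ[f|G] :=
    condExp_mul_of_stronglyMeasurable_left (hgmeas.stronglyMeasurable) hgfint hfint
  have hce := hpcond T hTmeas hT01
  have hcenn : 0 ≤ᵐ[μ] μ[f|G] := condExp_nonneg (by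
    refine Filter.Eventually.of_forall fun ω => ?_
    rw [hf]; by_cases hω : ω ∈ {ω' | p ω' ≤ T ω'} <;> simp [Set.indicator_apply, hω])
  have hgoal_eq : ∀ ω, Set.indicator {ω' | p ω' ≤ q * (R ω' : ℝ) / m}
      (fun ω' => ((R ω' : ℝ))⁻¹) ω = (g * f) ω := by
    intro ω
    by_cases hω : p ω ≤ q * (R ω : ℝ) / m <;>
      simp [Set.indicator_apply, hω, hf, hg, hT, Set.mem_setOf_eq]
  calc ∫ ω, Set.indicator {ω' | p ω' ≤ q * (R ω' : ℝ) / m} (fun ω' => ((R ω' : ℝ))⁻¹) ω ∂μ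
      = ∫ ω, (g * f) ω ∂μ := by exact integral_congr_ae (Filter.Eventually.of_forall hgoal_eq)
    _ = ∫ ω, (μ[g * f|G]) ω ∂μ := (integral_condExp hG).symm
    _ ≤ ∫ ω, (q / m) ∂μ := by
        apply integral_mono_ae integrable_condExp (integrable_const _)
        filter_upwards [key, hce, hcenn] with ω hkey hle hnn
        rw [hkey]
        have : g ω * (μ[f|G]) ω ≤ g ω * T ω := by
          apply mul_le_mul_of_nonneg_left hle (by positivity)
        refine this.trans_eq ?_
        have hRne : ((R ω : ℝ)) ≠ 0 := (hRpos ω).ne'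
        have hmne : ((m:ℝ)) ≠ 0 := hm0.ne'
        rw [hg, hT]
        field_simp
    _ = q / m := by simp
end

section
/- Let p_1, …, p_m in [0,1] and q in (0,1), let S_BH be the output of the BH procedure at level q applied to (p_1, …, p_m), and write R = |S_BH|. Fix j in [m] with p_j ≤ q·R/m. Let p'_1, …, p'_m in [0,1] satisfy p'_j = 0 and, for every ℓ ≠ j, either (p'_ℓ = p_ℓ and p_ℓ ≥ p_j) or (p_ℓ ≤ p_j and p'_ℓ ≤ p_j). Then the BH procedure at level q applied to (p'_1, …, p'_m) produces a selection set of exactly the same size: |BH(p')| = R. -/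
/-
The BH index depends only on the rejection counts `#{ℓ : p_ℓ ≤ q·r/m}` for `r ≥ R`, where `R` is
the index itself. For every level `t ≥ p_j` the replacement does not change `{ℓ : p_ℓ ≤ t}`:
coordinates other than `j` either keep their value or stay below `p_j` on both sides, and `j` lies
below `t` on both sides. Since `q·R/m ≥ p_j`, the counts agree for all `r ≥ R`, so the BH index,
and with it the number of rejections, is unchanged.
-/

theorem Nat.findGreatest_congr_of_le {P Q : ℕ → Prop} [DecidablePred P] [DecidablePred Q]
    {n : ℕ} (h : ∀ k, Nat.findGreatest P n ≤ k → k ≤ n → (Q k ↔ P k)) :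
    Nat.findGreatest Q n = Nat.findGreatest P n := by
  set R := Nat.findGreatest P n
  have hRn : R ≤ n := Nat.findGreatest_le n
  refine Nat.findGreatest_eq_iff.2 ⟨hRn, fun hR => (h R le_rfl hRn).2 ?_, fun k hk hkn => ?_⟩
  · exact Nat.findGreatest_of_ne_zero rfl hR
  · exact (h k hk.le hkn).not.2 (Nat.findGreatest_is_greatest hk hkn)

section BH

variable {m : ℕ} {q : ℝ}

lemma bhLevel_mono (hq : 0 ≤ q) {r s : ℕ} (hrs : r ≤ s) : q * (r : ℝ) / m ≤ q * (s : ℝ) / m := by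
  gcongr

lemma ncard_bhSet (hq : 0 ≤ q) (p : Fin m → ℝ) :
    (bhSet m q p).ncard = bhThreshold m q p := by
  set R := bhThreshold m q p
  have hspec : R ≤ (bhSet m q p).ncard :=
    Nat.findGreatest_spec (P := fun r => r ≤ Set.ncard {j : Fin m | p j ≤ q * (r : ℝ) / m})
      (Nat.zero_le m) (Nat.zero_le _)
  refine le_antisymm (not_lt.1 fun hlt => ?_) hspec
  have hRm : R + 1 ≤ m := hlt.trans_le ((Set.ncard_le_card _).trans (Nat.card_fin m).le)
  have hmono : (bhSet m q p).ncard ≤ Set.ncard {ℓ : Fin m | p ℓ ≤ q * ((R + 1 : ℕ) : ℝ) / m} :=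
    Set.ncard_le_ncard fun ℓ hℓ => le_trans hℓ (bhLevel_mono hq R.le_succ)
  exact Nat.findGreatest_is_greatest (lt_add_one R) hRm (hlt.trans_le hmono)

lemma setOf_le_eq_of_replacement {p p' : Fin m → ℝ} {j : Fin m}
    (hrepl : ∀ ℓ, ℓ ≠ j → p' ℓ = p ℓ ∨ (p ℓ ≤ p j ∧ p' ℓ ≤ p j))
    {t : ℝ} (hpt : p j ≤ t) (hp't : p' j ≤ t) :
    {ℓ | p' ℓ ≤ t} = {ℓ | p ℓ ≤ t} := by
  ext ℓ
  rcases eq_or_ne ℓ j with rfl | hℓj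
  · exact ⟨fun _ => hpt, fun _ => hp't⟩
  rcases hrepl ℓ hℓj with heq | ⟨hle, hle'⟩
  · simp only [Set.mem_ofPred_eq, heq]
  · exact ⟨fun _ => hle.trans hpt, fun _ => hle'.trans hpt⟩

lemma bhThreshold_eq_of_replacement (hq : 0 ≤ q) {p p' : Fin m → ℝ} {j : Fin m}
    (hrepl : ∀ ℓ, ℓ ≠ j → p' ℓ = p ℓ ∨ (p ℓ ≤ p j ∧ p' ℓ ≤ p j))
    (hj : p j ≤ q * (bhThreshold m q p : ℝ) / m) (hj' : p' j ≤ 0) :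
    bhThreshold m q p' = bhThreshold m q p := by
  refine Nat.findGreatest_congr_of_le fun r hr _ => ?_
  have hpr : p j ≤ q * (r : ℝ) / m := hj.trans (bhLevel_mono hq hr)
  have hp'r : p' j ≤ q * (r : ℝ) / m := hj'.trans (by positivity)
  rw [setOf_le_eq_of_replacement hrepl hpr hp'r]

end BH

theorem bh_card_stable_under_replacement_general
    (m : ℕ) (q : ℝ) (hq : q ∈ Set.Ioo (0 : ℝ) 1)
    (p : Fin m → ℝ)
    (j : Fin m) (hj : p j ≤ q * (Set.ncard (bhSet m q p) : ℝ) / m)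
    (p' : Fin m → ℝ)
    (hj' : p' j = 0)
    (hrepl : ∀ ℓ, ℓ ≠ j →
      (p' ℓ = p ℓ ∧ p j ≤ p ℓ) ∨ (p ℓ ≤ p j ∧ p' ℓ ≤ p j)) :
    Set.ncard (bhSet m q p') = Set.ncard (bhSet m q p) := by
  have hq0 : 0 ≤ q := hq.1.le
  simp only [ncard_bhSet hq0] at hj ⊢
  exact bhThreshold_eq_of_replacement hq0 (fun ℓ hℓ => (hrepl ℓ hℓ).imp_left And.left) hj hj'.le

/-- Let S_BH be the BH set at level q for p, with R = |S_BH|, and let j satisfy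
p_j ≤ q·R/m.  If p' has p'_j = 0 and, for every ℓ ≠ j, either (p'_ℓ = p_ℓ and p_ℓ ≥ p_j) or
(p_ℓ ≤ p_j and p'_ℓ ≤ p_j), then BH applied to p' selects exactly R indices. -/
theorem bh_card_stable_under_replacement
    (m : ℕ) (q : ℝ) (hq : q ∈ Set.Ioo (0 : ℝ) 1)
    (p : Fin m → ℝ) (hp : ∀ j, p j ∈ Set.Icc (0 : ℝ) 1)
    (j : Fin m) (hj : p j ≤ q * (Set.ncard (bhSet m q p) : ℝ) / m)
    (p' : Fin m → ℝ) (hp' : ∀ ℓ, p' ℓ ∈ Set.Icc (0 : ℝ) 1)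
    (hj' : p' j = 0)
    (hrepl : ∀ ℓ, ℓ ≠ j →
      (p' ℓ = p ℓ ∧ p j ≤ p ℓ) ∨ (p ℓ ≤ p j ∧ p' ℓ ≤ p j)) :
    Set.ncard (bhSet m q p') = Set.ncard (bhSet m q p) :=
  bh_card_stable_under_replacement_general m q hq p j hj p' hj' hrepl
end

section
/- Let p_1, …, p_m in [0,1], strictly positive reals R̂_1, …, R̂_m, q in (0,1), and let H₀ ⊆ [m] be any subset (the null indices). With S = S(1, …, 1) the deterministically pruned selection set, the pointwise inequality #(S ∩ H₀) / max(1, |S|) ≤ Σ_{j in H₀} 1{p_j ≤ q·R̂_j/m} / R̂_j holds. -/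
/-!
Every selected index `j` has `R̂_j ≤ r*`, and `r* ≤ |S|` by the defining property of `r*`.
Hence each false discovery `j ∈ S ∩ H₀` contributes `1 / max(1, |S|) ≤ 1 / R̂_j` to the
left-hand side, and `1 / R̂_j` is exactly its term on the right-hand side.
-/

theorem prunedThreshold_le_ncard_prunedSet (m : ℕ) (q : ℝ) (p R lam : Fin m → ℝ) :
    prunedThreshold m q p R lam ≤ (prunedSet m q p R lam).ncard :=
  Nat.findGreatest_spec (P := fun r =>
      r ≤ Set.ncard {j : Fin m | p j ≤ q * R j / m ∧ lam j * R j ≤ (r : ℝ)})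
    (Nat.zero_le m) (Nat.zero_le _)

theorem R_le_ncard_of_mem_prunedSet {m : ℕ} {q : ℝ} {p R : Fin m → ℝ} {j : Fin m}
    (hj : j ∈ prunedSet m q p R (fun _ => 1)) :
    R j ≤ (prunedSet m q p R (fun _ => 1)).ncard :=
  calc R j = 1 * R j := (one_mul _).symm
    _ ≤ prunedThreshold m q p R (fun _ => 1) := hj.2
    _ ≤ (prunedSet m q p R (fun _ => 1)).ncard := by
      exact_mod_cast prunedThreshold_le_ncard_prunedSet m q p R _

theorem Finset.card_div_le_sum_one_div {ι : Type*} (s : Finset ι) (w : ι → ℝ) {d : ℝ}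
    (hw : ∀ i ∈ s, 0 < w i ∧ w i ≤ d) :
    (s.card : ℝ) / d ≤ ∑ i ∈ s, 1 / w i :=
  calc (s.card : ℝ) / d = ∑ _i ∈ s, 1 / d := by
        rw [Finset.sum_const, nsmul_eq_mul, mul_one_div]
    _ ≤ ∑ i ∈ s, 1 / w i :=
        Finset.sum_le_sum fun i hi => one_div_le_one_div_of_le (hw i hi).1 (hw i hi).2

theorem pruned_fdp_le_sum_general
    (m : ℕ) (q : ℝ)
    (p : Fin m → ℝ)
    (R : Fin m → ℝ) (hR : ∀ j, 0 < R j)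
    (H0 : Finset (Fin m)) :
    (Set.ncard (prunedSet m q p R (fun _ => 1) ∩ ↑H0) : ℝ) /
        ((max 1 (Set.ncard (prunedSet m q p R (fun _ => 1))) : ℕ) : ℝ)
      ≤ ∑ j ∈ H0,
          Set.indicator {j' : Fin m | p j' ≤ q * R j' / m} (fun j' => 1 / R j') j := by
  classical
  set S := prunedSet m q p R (fun _ => 1)
  set D := H0.filter (· ∈ S)
  have hD : S ∩ ↑H0 = ↑D := by ext j; simp [D, and_comm]
  have hR_le : ∀ j ∈ D, 0 < R j ∧ R j ≤ ((max 1 S.ncard : ℕ) : ℝ) := fun j hj =>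
    ⟨hR j, (R_le_ncard_of_mem_prunedSet (Finset.mem_filter.1 hj).2).trans
      (by exact_mod_cast le_max_right _ _)⟩
  rw [hD, Set.ncard_coe_finset]
  calc (D.card : ℝ) / ((max 1 S.ncard : ℕ) : ℝ) ≤ ∑ j ∈ D, 1 / R j :=
        D.card_div_le_sum_one_div R hR_le
    _ = ∑ j ∈ D, Set.indicator {j' : Fin m | p j' ≤ q * R j' / m} (fun j' => 1 / R j') j :=
        Finset.sum_congr rfl fun j hj =>
          (Set.indicator_of_mem (s := {j' : Fin m | p j' ≤ q * R j' / m})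
            (Finset.mem_filter.1 hj).2.1 fun j' => 1 / R j').symm
    _ ≤ _ := Finset.sum_le_sum_of_subset_of_nonneg (Finset.filter_subset _ _) fun j _ _ =>
        Set.indicator_nonneg (fun j' _ => one_div_nonneg.2 (hR j').le) j

/-- Pointwise FDP bound for the deterministically pruned selection set:
for any set H₀ of null indices,
#(S ∩ H₀)/max(1,|S|) ≤ Σ_{j ∈ H₀} 1{p_j ≤ q·R̂_j/m}/R̂_j, where S = S(1,…,1). -/
theorem pruned_fdp_le_sum
    (m : ℕ) (q : ℝ) (hq : q ∈ Set.Ioo (0 : ℝ) 1)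
    (p : Fin m → ℝ) (hp : ∀ j, p j ∈ Set.Icc (0 : ℝ) 1)
    (R : Fin m → ℝ) (hR : ∀ j, 0 < R j)
    (H0 : Finset (Fin m)) :
    (Set.ncard (prunedSet m q p R (fun _ => 1) ∩ ↑H0) : ℝ) /
        ((max 1 (Set.ncard (prunedSet m q p R (fun _ => 1))) : ℕ) : ℝ)
      ≤ ∑ j ∈ H0,
          Set.indicator {j' : Fin m | p j' ≤ q * R j' / m} (fun j' => 1 / R j') j :=
  pruned_fdp_le_sum_general m q p R hR H0
end

section
/- Fix j in [m]. Suppose that, conditional on (Z_1, …, Z_{n₁}) and {Ẑ_{n+ℓ}}_{ℓ≠j}, the vector (Z_{n₁+1}, …, Z_n, Z_{n+j}) is exchangeable, and let V be a permutation-equivariant score-generating functional. Define the oracle scores (V̄^{(j)}_{n₁+1}, …, V̄^{(j)}_n, V̄^{(j)}_{n+1}, …, V̄^{(j)}_{n+m}) = V^{(j)}(Z_{1:n₁}, Z_{n₁+1:n}, Ẑ_{n+1:n+j-1}, Z_{n+j}, Ẑ_{n+j+1:n+m}), in which the true labeled point Z_{n+j} is used in the j-th test slot. Then, conditional on (Z_1,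 …, Z_{n₁}), {Ẑ_{n+ℓ}}_{ℓ≠j}, and the unordered multiset [Z_{n₁+1}, …, Z_n, Z_{n+j}], the n₂+1 scores (V̄^{(j)}_{n₁+1}, …, V̄^{(j)}_n, V̄^{(j)}_{n+j}) are exchangeable. -/
open MeasureTheory ProbabilityTheory

namespace OptCS

variable {𝓧 𝓨 : Type*}

/-!
Push both sides of the exchangeability hypothesis forward along the map recording the
preparatory data, the other test points, the empirical measure of the `n₂ + 1` full observations
and the oracle scores. Permuting the full observations leaves the empirical measure unchanged
and, by permutation equivariance, permutes the oracle scores in the same way, so the two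
pushforwards are the two sides of the conclusion.
-/

section FunSplitAt

variable {α β : Type*} [DecidableEq α]

theorem _root_.Equiv.funSplitAt_symm_apply_self (i : α) (b : β) (f : {j // j ≠ i} → β) :
    (Equiv.funSplitAt i β).symm (b, f) i = b := by
  simp

theorem _root_.Equiv.funSplitAt_symm_restrict (i : α) (b : β) (g : α → β) :
    (Equiv.funSplitAt i β).symm (b, fun j => g j) = Function.update g i b := by
  rw [Equiv.symm_apply_eq]
  ext j
  · simp
  · simp [Function.update_of_ne j.2]

theorem _root_.Equiv.update_funSplitAt_symm (i : α) (b b' : β) (f : {j // j ≠ i} → β) :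
    Function.update ((Equiv.funSplitAt i β).symm (b, f)) i b' =
      (Equiv.funSplitAt i β).symm (b', f) := by
  rw [← Equiv.funSplitAt_symm_restrict]
  congr
  funext j
  simp [j.2]

theorem measurable_funSplitAt_symm [MeasurableSpace β] (i : α) :
    Measurable (Equiv.funSplitAt i β).symm := by
  refine measurable_pi_lambda _ fun j => ?_
  by_cases h : j = i
  · subst h
    simpa using measurable_fst
  · simp only [Equiv.funSplitAt_symm_apply, h, dite_false]
    fun_prop

end FunSplitAt

section OracleScores

variable {n₁ n₂ m : ℕ}

theorem combine_some_none (full : Option (Fin n₂) → 𝓧 × 𝓨) :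
    combine (fun i => full (some i)) (full none) = full := by
  funext o
  cases o <;> rfl

/-- `full` fills the calibration slots and, at `none`, the `j`-th test slot, as in `combine`. -/
def oracleScores (V : SGF 𝓧 𝓨 n₁ n₂ m) (j : Fin m) (prep : Fin n₁ → 𝓧 × 𝓨)
    (others : {l : Fin m // l ≠ j} → 𝓧 × 𝓨) (full : Option (Fin n₂) → 𝓧 × 𝓨) :
    Option (Fin n₂) → ℝ :=
  fun o => V prep (fun i => full (some i)) ((Equiv.funSplitAt j _).symm (full none, others)) j
    (coordIdx j o)

theorem oracleScores_combine (V : SGF 𝓧 𝓨 n₁ n₂ m) (j : Fin m) (prep : Fin n₁ → 𝓧 × 𝓨)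
    (others : {l : Fin m // l ≠ j} → 𝓧 × 𝓨) (cal : Fin n₂ → 𝓧 × 𝓨) (zj : 𝓧 × 𝓨) :
    oracleScores V j prep others (combine cal zj) =
      fun o => V prep cal ((Equiv.funSplitAt j _).symm (zj, others)) j (coordIdx j o) :=
  rfl

theorem oracleScores_comp_perm {V : SGF 𝓧 𝓨 n₁ n₂ m} (hV : PermEquivariant V) (j : Fin m)
    (prep : Fin n₁ → 𝓧 × 𝓨) (others : {l : Fin m // l ≠ j} → 𝓧 × 𝓨)
    (full : Option (Fin n₂) → 𝓧 × 𝓨) (σ : Equiv.Perm (Option (Fin n₂))) :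
    oracleScores V j prep others (fun o => full (σ o)) =
      fun o => oracleScores V j prep others full (σ o) := by
  funext o
  have h := hV j prep (fun i => full (some i)) ((Equiv.funSplitAt j _).symm (full none, others))
    σ o
  rwa [Equiv.funSplitAt_symm_apply_self, combine_some_none, Equiv.update_funSplitAt_symm] at h

variable [MeasurableSpace 𝓧] [MeasurableSpace 𝓨]

noncomputable def oracleStatistic (V : SGF 𝓧 𝓨 n₁ n₂ m) (j : Fin m) :
    (Fin n₁ → 𝓧 × 𝓨) × ({l : Fin m // l ≠ j} → 𝓧 × 𝓨) × (Option (Fin n₂) → 𝓧 × 𝓨) →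
      (Fin n₁ → 𝓧 × 𝓨) × ({l : Fin m // l ≠ j} → 𝓧 × 𝓨) × Measure (𝓧 × 𝓨) ×
        (Option (Fin n₂) → ℝ) :=
  fun a => (a.1, a.2.1, ∑ o, Measure.dirac (a.2.2 o), oracleScores V j a.1 a.2.1 a.2.2)

theorem oracleStatistic_comp_perm {V : SGF 𝓧 𝓨 n₁ n₂ m} (hV : PermEquivariant V) (j : Fin m)
    (prep : Fin n₁ → 𝓧 × 𝓨) (others : {l : Fin m // l ≠ j} → 𝓧 × 𝓨)
    (full : Option (Fin n₂) → 𝓧 × 𝓨) (σ : Equiv.Perm (Option (Fin n₂))) :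
    oracleStatistic V j (prep, others, fun o => full (σ o)) =
      (prep, others, ∑ o, Measure.dirac (full o),
        fun o => oracleScores V j prep others full (σ o)) := by
  simp only [oracleStatistic, oracleScores_comp_perm hV,
    Equiv.sum_comp σ fun o => Measure.dirac (full o)]

theorem measurable_oracleStatistic {V : SGF 𝓧 𝓨 n₁ n₂ m} {j : Fin m}
    (hV : ∀ co, Measurable fun a : (Fin n₁ → 𝓧 × 𝓨) × (Fin n₂ → 𝓧 × 𝓨) × (Fin m → 𝓧 × 𝓨) =>
      V a.1 a.2.1 a.2.2 j co) :
    Measurable (oracleStatistic V j) := by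
  have hsplit := measurable_funSplitAt_symm (β := 𝓧 × 𝓨) j
  have hinputs : Measurable fun a : (Fin n₁ → 𝓧 × 𝓨) × ({l : Fin m // l ≠ j} → 𝓧 × 𝓨) ×
      (Option (Fin n₂) → 𝓧 × 𝓨) =>
        (a.1, (fun i => a.2.2 (some i)), (Equiv.funSplitAt j _).symm (a.2.2 none, a.2.1)) := by
    fun_prop
  have hscores : Measurable fun a : (Fin n₁ → 𝓧 × 𝓨) × ({l : Fin m // l ≠ j} → 𝓧 × 𝓨) ×
      (Option (Fin n₂) → 𝓧 × 𝓨) => oracleScores V j a.1 a.2.1 a.2.2 :=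
    measurable_pi_lambda _ fun o => (hV (coordIdx j o)).comp hinputs
  unfold oracleStatistic
  fun_prop

end OracleScores

theorem oracle_scores_conditionally_exchangeable_general
    {Ω : Type*} [MeasurableSpace Ω] (μ : Measure Ω)
    {𝓧 𝓨 : Type*} [MeasurableSpace 𝓧] [MeasurableSpace 𝓨]
    (n₁ n₂ m : ℕ) (cfun : 𝓧 → 𝓨) (hcfun : Measurable cfun)
    (V : SGF 𝓧 𝓨 n₁ n₂ m) (j : Fin m)
    (Zprep : Fin n₁ → Ω → 𝓧 × 𝓨) (Zcal : Fin n₂ → Ω → 𝓧 × 𝓨)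
    (Xt : Fin m → Ω → 𝓧) (Yt : Fin m → Ω → 𝓨)
    (hVmeas : ∀ (j' : Fin m) (co : Fin n₂ ⊕ Fin m),
      Measurable (fun a : (Fin n₁ → 𝓧 × 𝓨) × (Fin n₂ → 𝓧 × 𝓨) × (Fin m → 𝓧 × 𝓨) =>
        V a.1 a.2.1 a.2.2 j' co))
    (hZprep : ∀ i, Measurable (Zprep i)) (hZcal : ∀ i, Measurable (Zcal i))
    (hXt : ∀ l, Measurable (Xt l)) (hYt : ∀ l, Measurable (Yt l))
    -- hypothesis: conditional exchangeability of (Z_{n₁+1}, …, Z_n, Z_{n+j}) given the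
    -- preparatory data and the other test points
    (hexch : ∀ π : Equiv.Perm (Option (Fin n₂)),
      Measure.map (fun ω =>
          ((fun i => Zprep i ω),
            (fun l : {l : Fin m // l ≠ j} => (Xt l.1 ω, cfun (Xt l.1 ω))),
            fun o : Option (Fin n₂) =>
              combine (fun i => Zcal i ω) (Xt j ω, Yt j ω) (π o))) μ
        = Measure.map (fun ω =>
          ((fun i => Zprep i ω),
            (fun l : {l : Fin m // l ≠ j} => (Xt l.1 ω, cfun (Xt l.1 ω))),
            fun o : Option (Fin n₂) =>
              combine (fun i => Zcal i ω) (Xt j ω, Yt j ω) o)) μ)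
    -- hypothesis: permutation equivariance of the score-generating functional
    (hequiv : PermEquivariant V) :
    -- conclusion: conditional exchangeability of the oracle scores, given the preparatory
    -- data, the other test points, and the unordered multiset of the n₂ + 1 full observations
    -- (encoded by its empirical measure)
    ∀ π : Equiv.Perm (Option (Fin n₂)),
      Measure.map (fun ω =>
          ((fun i => Zprep i ω),
            (fun l : {l : Fin m // l ≠ j} => (Xt l.1 ω, cfun (Xt l.1 ω))),
            (∑ o : Option (Fin n₂),
              Measure.dirac (combine (fun i => Zcal i ω) (Xt j ω, Yt j ω) o)),
            fun o : Option (Fin n₂) =>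
              V (fun i => Zprep i ω) (fun i => Zcal i ω)
                (Function.update (fun l => (Xt l ω, cfun (Xt l ω))) j (Xt j ω, Yt j ω)) j
                (coordIdx j (π o)))) μ
        = Measure.map (fun ω =>
          ((fun i => Zprep i ω),
            (fun l : {l : Fin m // l ≠ j} => (Xt l.1 ω, cfun (Xt l.1 ω))),
            (∑ o : Option (Fin n₂),
              Measure.dirac (combine (fun i => Zcal i ω) (Xt j ω, Yt j ω) o)),
            fun o : Option (Fin n₂) =>
              V (fun i => Zprep i ω) (fun i => Zcal i ω)
                (Function.update (fun l => (Xt l ω, cfun (Xt l ω))) j (Xt j ω, Yt j ω)) j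
                (coordIdx j o))) μ := by
  intro π
  have hcombine : Measurable fun ω => combine (fun i => Zcal i ω) (Xt j ω, Yt j ω) :=
    measurable_pi_lambda _ fun o => by
      cases o
      · exact (hXt j).prodMk (hYt j)
      · exact hZcal _
  have hobs : ∀ σ : Equiv.Perm (Option (Fin n₂)), Measurable fun ω =>
      ((fun i => Zprep i ω), (fun l : {l : Fin m // l ≠ j} => (Xt l.1 ω, cfun (Xt l.1 ω))),
        fun o => combine (fun i => Zcal i ω) (Xt j ω, Yt j ω) (σ o)) := by
    intro σ
    fun_prop
  have hT := measurable_oracleStatistic (hVmeas j)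
  have hlaw := congrArg (Measure.map (oracleStatistic V j)) (hexch π)
  rw [Measure.map_map hT (hobs π), Measure.map_map hT] at hlaw
  · simp only [Function.comp_def, oracleStatistic_comp_perm hequiv] at hlaw
    simpa only [oracleStatistic, oracleScores_combine, ← Equiv.funSplitAt_symm_restrict] using hlaw
  · -- `hobs 1` is this goal up to unfolding `(1 : Equiv.Perm _) o = o`
    exact hobs 1

/-- Fix j.  If, conditionally on the preparatory data and the other
(partially observed) test points, the calibration points together with the j-th test point are
exchangeable, and the score-generating functional V is permutation equivariant, then the
oracle scores (V̄_{n₁+1}, …, V̄_n, V̄_{n+j}) — computed with the true point Z_{n+j} in the j-th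
test slot — are exchangeable conditionally on the preparatory data, the other test points, and
the unordered multiset [Z_{n₁+1}, …, Z_n, Z_{n+j}] (encoded by its empirical measure). -/
theorem oracle_scores_conditionally_exchangeable
    {Ω : Type*} [MeasurableSpace Ω] (μ : Measure Ω) [IsProbabilityMeasure μ]
    {𝓧 𝓨 : Type*} [MeasurableSpace 𝓧] [MeasurableSpace 𝓨]
    (n₁ n₂ m : ℕ) (cfun : 𝓧 → 𝓨) (hcfun : Measurable cfun)
    (V : SGF 𝓧 𝓨 n₁ n₂ m) (j : Fin m)
    (Zprep : Fin n₁ → Ω → 𝓧 × 𝓨) (Zcal : Fin n₂ → Ω → 𝓧 × 𝓨)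
    (Xt : Fin m → Ω → 𝓧) (Yt : Fin m → Ω → 𝓨)
    (hVmeas : ∀ (j' : Fin m) (co : Fin n₂ ⊕ Fin m),
      Measurable (fun a : (Fin n₁ → 𝓧 × 𝓨) × (Fin n₂ → 𝓧 × 𝓨) × (Fin m → 𝓧 × 𝓨) =>
        V a.1 a.2.1 a.2.2 j' co))
    (hZprep : ∀ i, Measurable (Zprep i)) (hZcal : ∀ i, Measurable (Zcal i))
    (hXt : ∀ l, Measurable (Xt l)) (hYt : ∀ l, Measurable (Yt l))
    -- hypothesis: conditional exchangeability of (Z_{n₁+1}, …, Z_n, Z_{n+j}) given the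
    -- preparatory data and the other test points
    (hexch : ∀ π : Equiv.Perm (Option (Fin n₂)),
      Measure.map (fun ω =>
          ((fun i => Zprep i ω),
            (fun l : {l : Fin m // l ≠ j} => (Xt l.1 ω, cfun (Xt l.1 ω))),
            fun o : Option (Fin n₂) =>
              combine (fun i => Zcal i ω) (Xt j ω, Yt j ω) (π o))) μ
        = Measure.map (fun ω =>
          ((fun i => Zprep i ω),
            (fun l : {l : Fin m // l ≠ j} => (Xt l.1 ω, cfun (Xt l.1 ω))),
            fun o : Option (Fin n₂) =>
              combine (fun i => Zcal i ω) (Xt j ω, Yt j ω) o)) μ)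
    -- hypothesis: permutation equivariance of the score-generating functional
    (hequiv : PermEquivariant V) :
    -- conclusion: conditional exchangeability of the oracle scores, given the preparatory
    -- data, the other test points, and the unordered multiset of the n₂ + 1 full observations
    -- (encoded by its empirical measure)
    ∀ π : Equiv.Perm (Option (Fin n₂)),
      Measure.map (fun ω =>
          ((fun i => Zprep i ω),
            (fun l : {l : Fin m // l ≠ j} => (Xt l.1 ω, cfun (Xt l.1 ω))),
            (∑ o : Option (Fin n₂),
              Measure.dirac (combine (fun i => Zcal i ω) (Xt j ω, Yt j ω) o)),
            fun o : Option (Fin n₂) =>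
              V (fun i => Zprep i ω) (fun i => Zcal i ω)
                (Function.update (fun l => (Xt l ω, cfun (Xt l ω))) j (Xt j ω, Yt j ω)) j
                (coordIdx j (π o)))) μ
        = Measure.map (fun ω =>
          ((fun i => Zprep i ω),
            (fun l : {l : Fin m // l ≠ j} => (Xt l.1 ω, cfun (Xt l.1 ω))),
            (∑ o : Option (Fin n₂),
              Measure.dirac (combine (fun i => Zcal i ω) (Xt j ω, Yt j ω) o)),
            fun o : Option (Fin n₂) =>
              V (fun i => Zprep i ω) (fun i => Zcal i ω)
                (Function.update (fun l => (Xt l ω, cfun (Xt l ω))) j (Xt j ω, Yt j ω)) j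
                (coordIdx j o))) μ :=
  oracle_scores_conditionally_exchangeable_general μ n₁ n₂ m cfun hcfun V j Zprep Zcal Xt Yt hVmeas
    hZprep hZcal hXt hYt hexch hequiv

end OptCS
end
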